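/- arXiv:2103.04737 — 4 statements merged into one kernel-verified Lean document; each statement's English description precedes it below -/
import Mathlib

section
/- Let a ∈ Δ_n^*, b ∈ Δ_m^*, C ∈ ℝ^{n×m}, ε ≥ 0, r ≥ 1, 0 < α ≤ 1/r and N ≥ 1. Set L_{ε,α} := sqrt( 3( 2‖C‖₂²/α⁴ + ((ε + 2‖C‖₂)/α³)² ) ) with ‖C‖₂ the spectral norm, and γ := 1/(2 L_{ε,α}). Let (Q₀,R₀,g₀) ∈ C(a,b,r,α) have strictly positive entries and define the mirror-descent iterates ξ_{k+1} := G_{ε,α}(ξ_k, γ) for k ≥ 0, starting from ξ₀ := (Q₀,R₀,g₀) (the iterates remain entrywise strictly positive, so the recursion is well defined). Then min_{0 ≤ k ≤ N−1} Δ_{ε,α}(ξ_k, γ) ≤ 4 L_{ε,α} D₀ / N, where D₀ := F_ε(Q₀,R₀,g₀) − LOT_{r,ε,α}. -/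
open Matrix Finset Real
open scoped RealInnerProductSpace

noncomputable section

/-- Real matrices indexed by `Fin n × Fin m`. -/
abbrev Mat (n m : ℕ) : Type := Matrix (Fin n) (Fin m) ℝ

/-- Triples `(Q, R, g)` as in the low-rank OT factorization. -/
abbrev LRTriple (n m r : ℕ) : Type := Mat n r × Mat m r × (Fin r → ℝ)

/-- Pairs `(Q, R)` (fixed middle marginal `g`). -/
abbrev LRPair (n m r : ℕ) : Type := Mat n r × Mat m r

/-- The interior of the probability simplex Δ_n^*: strictly positive entries summing to 1. -/
def posSimplex (n : ℕ) : Set (Fin n → ℝ) := {a | (∀ i, 0 < a i) ∧ ∑ i, a i = 1}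

/-- Frobenius inner product ⟨C, P⟩ = Σ_{ij} C_ij P_ij. -/
def frobInner {n m : ℕ} (C P : Mat n m) : ℝ := ∑ i, ∑ j, C i j * P i j

/-- Entropy H(P) = −Σ_{ij} P_ij (log P_ij − 1) (with 0 log 0 = 0, as `Real.log 0 = 0`). -/
def matH {n m : ℕ} (P : Mat n m) : ℝ := -∑ i, ∑ j, P i j * (Real.log (P i j) - 1)

/-- Entropy of a vector. -/
def vecH {r : ℕ} (g : Fin r → ℝ) : ℝ := -∑ i, g i * (Real.log (g i) - 1)

/-- Kullback–Leibler divergence KL(P,Q) = Σ_{ij} P_ij (log(P_ij/Q_ij) − 1). -/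
def matKL {n m : ℕ} (P Q : Mat n m) : ℝ := ∑ i, ∑ j, P i j * (Real.log (P i j / Q i j) - 1)

/-- Kullback–Leibler divergence of vectors. -/
def vecKL {r : ℕ} (p q : Fin r → ℝ) : ℝ := ∑ i, p i * (Real.log (p i / q i) - 1)

/-- KL divergence on triples, summing over the three components. -/
def tripleKL {n m r : ℕ} (x y : LRTriple n m r) : ℝ :=
  matKL x.1 y.1 + matKL x.2.1 y.2.1 + vecKL x.2.2 y.2.2

/-- KL divergence on pairs, summing over the two components. -/
def pairKL {n m r : ℕ} (x y : LRPair n m r) : ℝ := matKL x.1 y.1 + matKL x.2 y.2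

/-- Euclidean inner product on triples. -/
def tripleInner {n m r : ℕ} (x y : LRTriple n m r) : ℝ :=
  frobInner x.1 y.1 + frobInner x.2.1 y.2.1 + ∑ i, x.2.2 i * y.2.2 i

/-- Euclidean inner product on pairs. -/
def pairInner {n m r : ℕ} (x y : LRPair n m r) : ℝ := frobInner x.1 y.1 + frobInner x.2 y.2

/-- Squared Euclidean norm of a triple (Frobenius on matrix blocks). -/
def tripleNormSq {n m r : ℕ} (x : LRTriple n m r) : ℝ :=
  (∑ i, ∑ j, (x.1 i j) ^ 2) + (∑ i, ∑ j, (x.2.1 i j) ^ 2) + ∑ i, (x.2.2 i) ^ 2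

/-- Squared Euclidean norm of a pair (Frobenius on matrix blocks). -/
def pairNormSq {n m r : ℕ} (x : LRPair n m r) : ℝ :=
  (∑ i, ∑ j, (x.1 i j) ^ 2) + (∑ i, ∑ j, (x.2 i j) ^ 2)

/-- The transport polytope Π_{a,b} of couplings with marginals `a` and `b`. -/
def couplings {n m : ℕ} (a : Fin n → ℝ) (b : Fin m → ℝ) : Set (Mat n m) :=
  {P | (∀ i j, 0 ≤ P i j) ∧ (∀ i, ∑ j, P i j = a i) ∧ (∀ j, ∑ i, P i j = b j)}

/-- The nonnegative rank: smallest `q` such that `M` is a sum of `q` nonnegative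
rank-one matrices. -/
def nonnegRank {n m : ℕ} (M : Mat n m) : ℕ :=
  sInf {q : ℕ | ∃ f : Fin q → Mat n m,
    (∀ i, (f i).rank = 1 ∧ ∀ k l, 0 ≤ f i k l) ∧ M = ∑ i, f i}

/-- Π_{a,b}(r): couplings with nonnegative rank at most `r`. -/
def couplingsRank {n m : ℕ} (a : Fin n → ℝ) (b : Fin m → ℝ) (r : ℕ) : Set (Mat n m) :=
  {P | P ∈ couplings a b ∧ nonnegRank P ≤ r}

/-- 𝒞₁(a,b,r): `Q, R` nonnegative with row sums `a`, `b`, and `g > 0`. -/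
def C1set {n m : ℕ} (a : Fin n → ℝ) (b : Fin m → ℝ) (r : ℕ) : Set (LRTriple n m r) :=
  {x | (∀ i j, 0 ≤ x.1 i j) ∧ (∀ i j, 0 ≤ x.2.1 i j) ∧ (∀ i, 0 < x.2.2 i) ∧
    (∀ i, ∑ j, x.1 i j = a i) ∧ (∀ i, ∑ j, x.2.1 i j = b i)}

/-- The closure of 𝒞₁(a,b,r): as 𝒞₁ but only `g ≥ 0`. -/
def C1barSet {n m : ℕ} (a : Fin n → ℝ) (b : Fin m → ℝ) (r : ℕ) : Set (LRTriple n m r) :=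
  {x | (∀ i j, 0 ≤ x.1 i j) ∧ (∀ i j, 0 ≤ x.2.1 i j) ∧ (∀ i, 0 ≤ x.2.2 i) ∧
    (∀ i, ∑ j, x.1 i j = a i) ∧ (∀ i, ∑ j, x.2.1 i j = b i)}

/-- 𝒞₁(a,b,r,α): as 𝒞₁ but with the lower bound `g ≥ α`. -/
def C1setAlpha {n m : ℕ} (a : Fin n → ℝ) (b : Fin m → ℝ) (r : ℕ) (α : ℝ) :
    Set (LRTriple n m r) :=
  {x | (∀ i j, 0 ≤ x.1 i j) ∧ (∀ i j, 0 ≤ x.2.1 i j) ∧ (∀ i, α ≤ x.2.2 i) ∧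
    (∀ i, ∑ j, x.1 i j = a i) ∧ (∀ i, ∑ j, x.2.1 i j = b i)}

/-- 𝒞₂(r): `Q, R, g` nonnegative with both column sums equal to `g`. -/
def C2set {n m : ℕ} (r : ℕ) : Set (LRTriple n m r) :=
  {x | (∀ i j, 0 ≤ x.1 i j) ∧ (∀ i j, 0 ≤ x.2.1 i j) ∧ (∀ i, 0 ≤ x.2.2 i) ∧
    (∀ j, ∑ i, x.1 i j = x.2.2 j) ∧ (∀ j, ∑ i, x.2.1 i j = x.2.2 j)}

/-- 𝒞(a,b,r) = 𝒞₁(a,b,r) ∩ 𝒞₂(r). -/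
def Cset {n m : ℕ} (a : Fin n → ℝ) (b : Fin m → ℝ) (r : ℕ) : Set (LRTriple n m r) :=
  C1set a b r ∩ C2set r

/-- 𝒞(a,b,r,α) = 𝒞₁(a,b,r,α) ∩ 𝒞₂(r). -/
def CsetAlpha {n m : ℕ} (a : Fin n → ℝ) (b : Fin m → ℝ) (r : ℕ) (α : ℝ) :
    Set (LRTriple n m r) :=
  C1setAlpha a b r α ∩ C2set r

/-- F_ε(Q,R,g) = ⟨C, Q Diag(1/g) Rᵀ⟩ − ε H((Q,R,g)). -/
def Fobj {n m r : ℕ} (C : Mat n m) (ε : ℝ) (x : LRTriple n m r) : ℝ :=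
  frobInner C (x.1 * Matrix.diagonal (fun i => (x.2.2 i)⁻¹) * x.2.1ᵀ) -
    ε * (matH x.1 + matH x.2.1 + vecH x.2.2)

/-- LOT_{r,ε} = inf of F_ε over 𝒞(a,b,r). -/
def LOTre {n m : ℕ} (a : Fin n → ℝ) (b : Fin m → ℝ) (C : Mat n m) (ε : ℝ) (r : ℕ) : ℝ :=
  sInf (Fobj C ε '' Cset a b r)

/-- LOT_{r,ε,α} = inf of F_ε over 𝒞(a,b,r,α). -/
def LOTreAlpha {n m : ℕ} (a : Fin n → ℝ) (b : Fin m → ℝ) (C : Mat n m) (ε : ℝ) (r : ℕ)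
    (α : ℝ) : ℝ :=
  sInf (Fobj C ε '' CsetAlpha a b r α)

/-- Spectral norm (ℓ²→ℓ² operator norm) of a matrix. -/
def specNorm {n m : ℕ} (C : Mat n m) : ℝ :=
  ‖LinearMap.toContinuousLinearMap (Matrix.toEuclideanLin C)‖

/-- The gradient ∇F_ε(Q,R,g) =
(C R Diag(1/g) + ε log Q, Cᵀ Q Diag(1/g) + ε log R, −𝒟(Qᵀ C R)/g² + ε log g). -/
def gradF {n m r : ℕ} (C : Mat n m) (ε : ℝ) (x : LRTriple n m r) : LRTriple n m r :=
  (Matrix.of fun i k => (C * x.2.1) i k * (x.2.2 k)⁻¹ + ε * Real.log (x.1 i k),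
   Matrix.of fun j k => (Cᵀ * x.1) j k * (x.2.2 k)⁻¹ + ε * Real.log (x.2.1 j k),
   fun k => -((x.1ᵀ * C * x.2.1) k k) / (x.2.2 k) ^ 2 + ε * Real.log (x.2.2 k))

/-- Entrywise logarithm of a triple. -/
def logTriple {n m r : ℕ} (x : LRTriple n m r) : LRTriple n m r :=
  (Matrix.of fun i k => Real.log (x.1 i k), Matrix.of fun j k => Real.log (x.2.1 j k),
   fun k => Real.log (x.2.2 k))

/-- The feasible set Π_{a,g} × Π_{b,g}. -/
def pairFeasible {n m r : ℕ} (a : Fin n → ℝ) (b : Fin m → ℝ) (g : Fin r → ℝ) :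
    Set (LRPair n m r) :=
  {u | u.1 ∈ couplings a g ∧ u.2 ∈ couplings b g}

/-- f_ε(Q,R) = ⟨C, Q Diag(1/g) Rᵀ⟩ − ε (H(Q) + H(R)) for fixed `g`. -/
def fobj {n m r : ℕ} (C : Mat n m) (g : Fin r → ℝ) (ε : ℝ) (x : LRPair n m r) : ℝ :=
  frobInner C (x.1 * Matrix.diagonal (fun i => (g i)⁻¹) * x.2ᵀ) - ε * (matH x.1 + matH x.2)

/-- LOT_{r,g,ε} = inf of f_ε over Π_{a,g} × Π_{b,g}. -/
def LOTfix {n m r : ℕ} (a : Fin n → ℝ) (b : Fin m → ℝ) (g : Fin r → ℝ) (C : Mat n m)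
    (ε : ℝ) : ℝ :=
  sInf (fobj C g ε '' pairFeasible a b g)

/-- The gradient ∇f_ε(Q,R) = (C R Diag(1/g) + ε log Q, Cᵀ Q Diag(1/g) + ε log R). -/
def gradf {n m r : ℕ} (C : Mat n m) (g : Fin r → ℝ) (ε : ℝ) (x : LRPair n m r) :
    LRPair n m r :=
  (Matrix.of fun i k => (C * x.2) i k * (g k)⁻¹ + ε * Real.log (x.1 i k),
   Matrix.of fun j k => (Cᵀ * x.1) j k * (g k)⁻¹ + ε * Real.log (x.2 j k))

/-- Entrywise logarithm of a pair. -/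
def logPair {n m r : ℕ} (x : LRPair n m r) : LRPair n m r :=
  (Matrix.of fun i k => Real.log (x.1 i k), Matrix.of fun j k => Real.log (x.2 j k))

end

/-!
Entropic mirror descent. Flatten a triple `(Q, R, g)` into the vector of all its entries. One
iteration is then an entropic proximal step `ξ ↦ argmin ⟨∇F_ε(ξ), ·⟩ + 2L · KL(·, ξ)` over the
convex set `𝒞(a,b,r,α)`. Its minimiser is entrywise positive, because the entropy has slope `-∞`
at `0`, and first-order optimality along the segment towards `ξ` bounds `2L` times the Jeffreys
divergence `∑ (ξ - ξ⁺) log (ξ / ξ⁺)` by `⟨∇F_ε(ξ), ξ - ξ⁺⟩`.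

On `𝒞(a,b,r,α)` the objective `F_ε` is `(ε + 3‖C‖₂/α)`-smooth relative to the entropy. The
entropic part contributes exactly `ε` times the Bregman divergence. Each column term `qᵀCρ / g`
has second-order remainder at most `3‖C‖₂/(2α) · ‖Δ‖²`, and `‖Δ‖² ≤ 2 · Bregman` because all
entries lie in `(0, 1]`. Since `L_{ε,α} ≥ ε + 3‖C‖₂/α`, every step decreases `F_ε` by at least
`L` times the symmetrised KL divergence of consecutive iterates. Telescoping down to
`F_ε ≥ LOT_{r,ε,α}` and taking the smallest of the `N` terms gives the bound.
-/

noncomputable section EntropicProx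

variable {ι : Type*} [Fintype ι]

def entKL (u v : ι → ℝ) : ℝ := ∑ i, u i * (log (u i / v i) - 1)

def entBregman (u v : ι → ℝ) : ℝ := ∑ i, (u i * log (u i / v i) - u i + v i)

def jeffreys (u v : ι → ℝ) : ℝ := ∑ i, (u i - v i) * log (u i / v i)

lemma jeffreys_eq_entBregman_add (u v : ι → ℝ) :
    jeffreys u v = entBregman v u + entBregman u v := by
  simp only [jeffreys, entBregman, ← Finset.sum_add_distrib]
  refine Finset.sum_congr rfl fun i _ => ?_
  rw [← inv_div, log_inv]
  ring

lemma entKL_add_entKL_le_jeffreys {u v : ι → ℝ} (hu : ∀ i, 0 ≤ u i) (hv : ∀ i, 0 ≤ v i) :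
    entKL u v + entKL v u ≤ jeffreys u v := by
  simp only [entKL, jeffreys, ← Finset.sum_add_distrib]
  refine Finset.sum_le_sum fun i _ => ?_
  rw [← inv_div (u i), log_inv]
  nlinarith [hu i, hv i]

lemma entBregman_nonneg {u v : ι → ℝ} (hu : ∀ i, 0 ≤ u i) (hv : ∀ i, 0 < v i) :
    0 ≤ entBregman u v := by
  refine Finset.sum_nonneg fun i _ => ?_
  rcases (hu i).eq_or_lt with h0 | hpos
  · simp [← h0, (hv i).le]
  · have hlog := one_sub_inv_le_log_of_pos (div_pos hpos (hv i))
    rw [inv_div, sub_le_iff_le_add] at hlog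
    have : u i * (1 - v i / u i) = u i - v i := by field_simp
    nlinarith [mul_le_mul_of_nonneg_left hlog hpos.le]

lemma sq_sub_le_two_mul_log_div_sub_add {x y : ℝ} (hx : 0 < x) (hx1 : x ≤ 1) (hy : 0 < y)
    (hy1 : y ≤ 1) : (y - x) ^ 2 ≤ 2 * (y * log (y / x) - y + x) := by
  set f : ℝ → ℝ := fun t => t * log t - t * log x - t + x - (t - x) ^ 2 / 2
  have hf (t : ℝ) (ht : 0 < t) : HasDerivAt f (log t - log x - (t - x)) t := by
    refine ((((hasDerivAt_mul_log ht.ne').sub ((hasDerivAt_id t).mul_const (log x))).sub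
      (hasDerivAt_id t)).add_const x).sub ((((hasDerivAt_id t).sub_const x).pow 2).div_const 2)
      |>.congr_deriv ?_
    norm_num
    ring
  have hcont (s : Set ℝ) (hs : s ⊆ Set.Ioi 0) : ContinuousOn f s := fun t ht =>
    (hf t (hs ht)).continuousAt.continuousWithinAt
  suffices f x ≤ f y by
    simp only [f, sub_self] at this
    rw [log_div hy.ne' hx.ne']
    nlinarith
  -- `f'` has the sign of `t - x` on `(0, 1]`
  rcases le_total x y with hxy | hyx
  · refine monotoneOn_of_hasDerivWithinAt_nonneg (f' := fun t => log t - log x - (t - x))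
      (convex_Icc x y) (hcont _ fun t ht => hx.trans_le ht.1) (fun t ht => ?_) (fun t ht => ?_)
      ⟨le_rfl, hxy⟩ ⟨hxy, le_rfl⟩ hxy
    all_goals rw [interior_Icc] at ht
    · exact (hf t (hx.trans ht.1)).hasDerivWithinAt
    · have ht0 : 0 < t := hx.trans ht.1
      have hlog := one_sub_inv_le_log_of_pos (div_pos ht0 hx)
      rw [log_div ht0.ne' hx.ne', inv_div] at hlog
      have : t - x ≤ 1 - x / t := by
        rw [one_sub_div ht0.ne', le_div_iff₀ ht0]
        nlinarith [ht.1, ht.2]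
      linarith
  · refine antitoneOn_of_hasDerivWithinAt_nonpos (f' := fun t => log t - log x - (t - x))
      (convex_Icc y x) (hcont _ fun t ht => hy.trans_le ht.1) (fun t ht => ?_) (fun t ht => ?_)
      ⟨le_rfl, hyx⟩ ⟨hyx, le_rfl⟩ hyx
    all_goals rw [interior_Icc] at ht
    · exact (hf t (hy.trans ht.1)).hasDerivWithinAt
    · have ht0 : 0 < t := hy.trans ht.1
      have hlog := log_le_sub_one_of_pos (div_pos ht0 hx)
      rw [log_div ht0.ne' hx.ne'] at hlog
      have : t / x - 1 ≤ t - x := by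
        rw [div_sub_one hx.ne', div_le_iff₀ hx]
        nlinarith [ht.1, ht.2]
      linarith

lemma sum_sq_sub_le_two_mul_entBregman {x y : ι → ℝ} (hx : ∀ i, 0 < x i) (hx1 : ∀ i, x i ≤ 1)
    (hy : ∀ i, 0 < y i) (hy1 : ∀ i, y i ≤ 1) :
    ∑ i, (y i - x i) ^ 2 ≤ 2 * entBregman y x := by
  rw [entBregman, Finset.mul_sum]
  exact Finset.sum_le_sum fun i _ =>
    sq_sub_le_two_mul_log_div_sub_add (hx i) (hx1 i) (hy i) (hy1 i)

lemma mul_log_div_sub_one_segment_le {x y t : ℝ} (hx : 0 < x) (hy : 0 ≤ y) (ht : 0 < t)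
    (ht1 : t ≤ 1) :
    (y + t * (x - y)) * (log ((y + t * (x - y)) / x) - 1) ≤
      (1 - t) * (y * (log (y / x) - 1)) - t * x + if y = 0 then t * log t * x else 0 := by
  rcases hy.eq_or_lt with rfl | hy
  · rw [if_pos rfl, show (0 + t * (x - 0)) / x = t by field_simp; ring]
    exact le_of_eq (by ring)
  · have h (p : ℝ) (hp : 0 < p) : p * (log (p / x) - 1) = p * log p - (log x + 1) * p := by
      rw [log_div hp.ne' hx.ne']; ring
    have hconv := convexOn_mul_log.2 (Set.mem_Ici.2 hy.le) (Set.mem_Ici.2 hx.le)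
      (sub_nonneg.2 ht1) ht.le (by ring)
    simp only [smul_eq_mul, show (1 - t) * y + t * x = y + t * (x - y) by ring] at hconv
    rw [if_neg hy.ne', h _ hy, h _ (by nlinarith)]
    nlinarith

lemma entKL_add_smul_sub_le {x y : ι → ℝ} (hx : ∀ i, 0 < x i) (hy : ∀ i, 0 ≤ y i) {t : ℝ}
    (ht : 0 < t) (ht1 : t ≤ 1) :
    entKL (y + t • (x - y)) x ≤ (1 - t) * entKL y x - t * ∑ i, x i +
      t * log t * ∑ i ∈ univ.filter (y · = 0), x i := by
  rw [Finset.sum_filter, entKL, entKL, Finset.mul_sum, Finset.mul_sum, Finset.mul_sum,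
    ← Finset.sum_sub_distrib, ← Finset.sum_add_distrib]
  refine Finset.sum_le_sum fun i _ => ?_
  simpa [mul_ite] using mul_log_div_sub_one_segment_le (hx i) (hy i) ht ht1

theorem pos_of_isMinOn_dotProduct_add_entKL {K : Set (ι → ℝ)} (hK : Convex ℝ K)
    {c x y : ι → ℝ} {s : ℝ} (hs : 0 < s) (hx : x ∈ K) (hxpos : ∀ i, 0 < x i) (hy : y ∈ K)
    (hy0 : ∀ i, 0 ≤ y i) (hmin : IsMinOn (fun z => c ⬝ᵥ z + s * entKL z x) K y) (i : ι) :
    0 < y i := by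
  set W := ∑ i ∈ univ.filter (y · = 0), x i
  set M := c ⬝ᵥ (x - y) - s * (entKL y x + ∑ i, x i)
  have hslope (t : ℝ) (ht : 0 < t) (ht1 : t ≤ 1) : 0 ≤ M + s * W * log t := by
    have hmin_t := isMinOn_iff.1 hmin _ (hK.add_smul_sub_mem hy hx ⟨ht.le, ht1⟩)
    have hkl := entKL_add_smul_sub_le hxpos hy0 ht ht1
    simp only [dotProduct_add, dotProduct_smul, smul_eq_mul] at hmin_t
    have : 0 ≤ t * (M + s * W * log t) := by nlinarith [mul_le_mul_of_nonneg_left hkl hs.le]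
    exact nonneg_of_mul_nonneg_right (by linarith) ht
  by_contra! hyi
  have hWpos : 0 < W :=
    (hxpos i).trans_le (Finset.single_le_sum (fun j _ => (hxpos j).le)
      (Finset.mem_filter.2 ⟨Finset.mem_univ i, le_antisymm hyi (hy0 i)⟩))
  -- `log t → -∞` as `t → 0`; this `t` is small enough to make the slope negative
  have := hslope (exp (-(|M| + 1) / (s * W))) (exp_pos _)
    (exp_le_one_iff.2 (div_nonpos_of_nonpos_of_nonneg (by linarith [abs_nonneg M]) (by positivity)))
  rw [log_exp, mul_div_cancel₀ _ (by positivity)] at this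
  linarith [le_abs_self M]

lemma hasDerivAt_mul_log_div_sub_one {x y : ℝ} (hx : 0 < x) (hy : 0 < y) (d : ℝ) :
    HasDerivAt (fun t => (y + t * d) * (log ((y + t * d) / x) - 1)) (d * log (y / x)) 0 := by
  have hlin : HasDerivAt (fun t : ℝ => y + t * d) d 0 := by
    simpa using ((hasDerivAt_id (0 : ℝ)).mul_const d).const_add y
  have hlog := ((hlin.div_const x).log (by simp [hy.ne', hx.ne'])).sub_const 1
  refine (hlin.mul hlog).congr_deriv ?_
  simp only [zero_mul, add_zero]
  field_simp
  ring

theorem mul_jeffreys_le_of_isMinOn_dotProduct_add_entKL {K : Set (ι → ℝ)} (hK : Convex ℝ K)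
    {c x y : ι → ℝ} {s : ℝ} (hx : x ∈ K) (hxpos : ∀ i, 0 < x i) (hy : y ∈ K)
    (hypos : ∀ i, 0 < y i) (hmin : IsMinOn (fun z => c ⬝ᵥ z + s * entKL z x) K y) :
    s * jeffreys x y ≤ c ⬝ᵥ (x - y) := by
  set φ : ℝ → ℝ := fun t => c ⬝ᵥ (y + t • (x - y)) + s * entKL (y + t • (x - y)) x
  have hφ : HasDerivAt φ (c ⬝ᵥ (x - y) - s * jeffreys x y) 0 := by
    have hsum := HasDerivAt.sum (u := univ) fun i _ =>
      (((hasDerivAt_id (0 : ℝ)).const_mul (c i * (x i - y i))).const_add (c i * y i)).add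
        ((hasDerivAt_mul_log_div_sub_one (hxpos i) (hypos i) (x i - y i)).const_mul s)
    refine (hsum.congr_deriv ?_).congr_of_eventuallyEq (Filter.Eventually.of_forall fun t => ?_)
    · simp only [jeffreys, dotProduct, Finset.mul_sum, ← Finset.sum_sub_distrib, Pi.sub_apply]
      refine Finset.sum_congr rfl fun i _ => ?_
      rw [← inv_div (x i), log_inv]
      ring
    · simp only [φ, entKL, dotProduct, Finset.sum_apply, Finset.mul_sum, ← Finset.sum_add_distrib]
      refine Finset.sum_congr rfl fun i _ => ?_
      simp only [Pi.add_apply, Pi.smul_apply, Pi.sub_apply, smul_eq_mul, id_eq]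
      ring
  have hφmin : IsMinOn φ (Set.Icc 0 1) 0 := fun t ht => by
    simpa [φ] using hmin (hK.add_smul_sub_mem hy hx ht)
  have := hφmin.localize.hasFDerivWithinAt_nonneg hφ.hasFDerivAt.hasFDerivWithinAt
    (y := 1) (mem_posTangentConeAt_of_segment_subset (by simp [segment_eq_Icc]))
  simpa only [ContinuousLinearMap.toSpanSingleton_apply, smul_eq_mul, one_mul, sub_nonneg]
    using this

end EntropicProx

theorem bilinear_div_remainder_le {E F : Type*} [SeminormedAddCommGroup E] [Module ℝ E]
    [SeminormedAddCommGroup F] [Module ℝ F] (B : E →ₗ[ℝ] F →ₗ[ℝ] ℝ) {σ α g g' : ℝ}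
    (hσ : 0 ≤ σ) (hB : ∀ u v, |B u v| ≤ σ * (‖u‖ * ‖v‖)) (hα : 0 < α) (hg : α ≤ g)
    (hg' : α ≤ g') {q q' : E} {ρ ρ' : F} (hq : ‖q‖ ≤ g) (hρ : ‖ρ‖ ≤ g) :
    B q' ρ' / g' - (B q' ρ + B q ρ') / g + B q ρ * g' / g ^ 2 ≤
      3 * σ / (2 * α) * (‖q' - q‖ ^ 2 + ‖ρ' - ρ‖ ^ 2 + (g' - g) ^ 2) := by
  obtain ⟨u, rfl⟩ : ∃ u, q' = q + u := ⟨q' - q, by abel⟩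
  obtain ⟨v, rfl⟩ : ∃ v, ρ' = ρ + v := ⟨ρ' - ρ, by abel⟩
  have hg0 : 0 < g := hα.trans_le hg
  have hg'0 : 0 < g' := hα.trans_le hg'
  simp only [map_add, LinearMap.add_apply, add_sub_cancel_left]
  set w := g' - g
  -- the first-order terms cancel, leaving three second-order terms
  have hexpand : (B q ρ + B u ρ + (B q v + B u v)) / g' - (B q ρ + B u ρ + (B q ρ + B q v)) / g +
      B q ρ * g' / g ^ 2 =
      B q ρ * w ^ 2 / (g ^ 2 * g') - (B u ρ + B q v) * w / (g * g') + B u v / g' := by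
    simp only [w]
    field_simp
    ring
  have hqρ : B q ρ ≤ σ * g ^ 2 := by
    calc B q ρ ≤ σ * (‖q‖ * ‖ρ‖) := (le_abs_self _).trans (hB q ρ)
      _ ≤ σ * g ^ 2 := by rw [sq]; gcongr
  have hmixed : |B u ρ + B q v| ≤ σ * g * (‖u‖ + ‖v‖) := by
    calc |B u ρ + B q v| ≤ σ * (‖u‖ * ‖ρ‖) + σ * (‖q‖ * ‖v‖) :=
          (abs_add_le _ _).trans (add_le_add (hB u ρ) (hB q v))
      _ ≤ σ * (‖u‖ * g) + σ * (g * ‖v‖) := by gcongr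
      _ = σ * g * (‖u‖ + ‖v‖) := by ring
  have h1 : B q ρ * w ^ 2 / (g ^ 2 * g') ≤ σ / α * w ^ 2 :=
    calc B q ρ * w ^ 2 / (g ^ 2 * g') ≤ σ * g ^ 2 * w ^ 2 / (g ^ 2 * g') := by gcongr
      _ = σ / g' * w ^ 2 := by field_simp
      _ ≤ σ / α * w ^ 2 := by gcongr
  have h2 : -((B u ρ + B q v) * w / (g * g')) ≤ σ / α * ((‖u‖ + ‖v‖) * |w|) :=
    calc -((B u ρ + B q v) * w / (g * g')) ≤ |B u ρ + B q v| * |w| / (g * g') := by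
          rw [← neg_div, ← abs_mul]; gcongr; exact neg_le_abs _
      _ ≤ σ * g * (‖u‖ + ‖v‖) * |w| / (g * g') := by gcongr
      _ = σ / g' * ((‖u‖ + ‖v‖) * |w|) := by field_simp
      _ ≤ σ / α * ((‖u‖ + ‖v‖) * |w|) := by gcongr
  have h3 : B u v / g' ≤ σ / α * (‖u‖ * ‖v‖) :=
    calc B u v / g' ≤ σ * (‖u‖ * ‖v‖) / g' := by gcongr; exact (le_abs_self _).trans (hB u v)
      _ ≤ σ * (‖u‖ * ‖v‖) / α := by gcongr
      _ = σ / α * (‖u‖ * ‖v‖) := by ring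
  have hquad : 2 * (w ^ 2 + (‖u‖ + ‖v‖) * |w| + ‖u‖ * ‖v‖) ≤ 3 * (‖u‖ ^ 2 + ‖v‖ ^ 2 + w ^ 2) := by
    nlinarith [sq_nonneg (‖u‖ + ‖v‖ - |w|), sq_nonneg (‖u‖ - ‖v‖), sq_abs w]
  have hσα : 0 ≤ σ / α := by positivity
  have hscale : 3 * σ / (2 * α) * (‖u‖ ^ 2 + ‖v‖ ^ 2 + w ^ 2) =
      σ / α * (3 * (‖u‖ ^ 2 + ‖v‖ ^ 2 + w ^ 2)) / 2 := by ring
  rw [hexpand, hscale]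
  linarith [mul_le_mul_of_nonneg_left hquad hσα]

lemma sum_sum_sum_comm {α β γ : Type*} [Fintype α] [Fintype β] [Fintype γ] (f : α → β → γ → ℝ) :
    ∑ a, ∑ b, ∑ c, f a b c = ∑ c, ∑ a, ∑ b, f a b c :=
  (Finset.sum_congr rfl fun _ _ => Finset.sum_comm).trans Finset.sum_comm

lemma exists_lt_le_div_of_le_sub {u f : ℕ → ℝ} {N : ℕ} (hN : 1 ≤ N)
    (h : ∀ k, u k ≤ f k - f (k + 1)) : ∃ k < N, u k ≤ (f 0 - f N) / N := by
  have hsum : ∑ k ∈ range N, u k ≤ ∑ _k ∈ range N, (f 0 - f N) / N := by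
    rw [Finset.sum_const, Finset.card_range, nsmul_eq_mul, mul_div_cancel₀ _ (by positivity),
      ← Finset.sum_range_sub']
    exact Finset.sum_le_sum fun k _ => h k
  obtain ⟨k, hk, hle⟩ := Finset.exists_le_of_sum_le (Finset.nonempty_range_iff.2 (by omega)) hsum
  exact ⟨k, Finset.mem_range.1 hk, hle⟩

-- `1 / (0 : ℝ) = 0`, so the hypothesis already excludes `r = 0`
lemma le_one_of_le_one_div_natCast {α : ℝ} {r : ℕ} (hα : 0 < α) (h : α ≤ 1 / (r : ℝ)) :
    α ≤ 1 := by
  rcases r.eq_zero_or_pos with rfl | hr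
  · simp only [CharP.cast_eq_zero, div_zero] at h
    linarith
  · exact h.trans (div_le_one_of_le₀ (by exact_mod_cast hr) r.cast_nonneg)

lemma convex_CsetAlpha {n m : ℕ} (a : Fin n → ℝ) (b : Fin m → ℝ) (r : ℕ) (α : ℝ) :
    Convex ℝ (CsetAlpha a b r α) := by
  rintro x ⟨⟨hxQ, hxR, hxg, hxQa, hxRb⟩, ⟨-, -, hxg0, hxQg, hxRg⟩⟩
    y ⟨⟨hyQ, hyR, hyg, hyQa, hyRb⟩, ⟨-, -, hyg0, hyQg, hyRg⟩⟩ s t hs ht hst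
  simp only [CsetAlpha, C1setAlpha, C2set, Set.mem_inter_iff, Set.mem_ofPred_eq, Prod.fst_add,
    Prod.snd_add, Prod.smul_fst, Prod.smul_snd, Matrix.add_apply, Matrix.smul_apply,
    Pi.add_apply, Pi.smul_apply, smul_eq_mul, Finset.sum_add_distrib, ← Finset.mul_sum]
  have hcomb {u v : ℝ} (hu : 0 ≤ u) (hv : 0 ≤ v) : 0 ≤ s * u + t * v := by positivity
  refine ⟨⟨fun i k => hcomb (hxQ i k) (hyQ i k), fun j k => hcomb (hxR j k) (hyR j k),
    fun k => ?_, fun i => ?_, fun j => ?_⟩, fun i k => hcomb (hxQ i k) (hyQ i k),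
    fun j k => hcomb (hxR j k) (hyR j k), fun k => hcomb (hxg0 k) (hyg0 k), fun k => ?_,
    fun k => ?_⟩
  · calc α = s * α + t * α := by rw [← add_mul, hst, one_mul]
      _ ≤ s * x.2.2 k + t * y.2.2 k := by gcongr; exacts [hxg k, hyg k]
  · rw [hxQa, hyQa, ← add_mul, hst, one_mul]
  · rw [hxRb, hyRb, ← add_mul, hst, one_mul]
  · rw [hxQg, hyQg]
  · rw [hxRg, hyRg]

noncomputable section LowRankCoordinates

variable {n m r : ℕ}

abbrev LRIndex (n m r : ℕ) : Type := (Fin n × Fin r) ⊕ (Fin m × Fin r) ⊕ Fin r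

def flatten : LRTriple n m r →ₗ[ℝ] LRIndex n m r → ℝ where
  toFun x := Sum.elim (fun p => x.1 p.1 p.2) (Sum.elim (fun p => x.2.1 p.1 p.2) x.2.2)
  map_add' x y := by ext ((⟨i, k⟩ | ⟨j, k⟩ | k)) <;> rfl
  map_smul' c x := by ext ((⟨i, k⟩ | ⟨j, k⟩ | k)) <;> rfl

@[simp] lemma flatten_inl (x : LRTriple n m r) (i : Fin n) (k : Fin r) :
    flatten x (.inl (i, k)) = x.1 i k := rfl

@[simp] lemma flatten_inr_inl (x : LRTriple n m r) (j : Fin m) (k : Fin r) :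
    flatten x (.inr (.inl (j, k))) = x.2.1 j k := rfl

@[simp] lemma flatten_inr_inr (x : LRTriple n m r) (k : Fin r) :
    flatten x (.inr (.inr k)) = x.2.2 k := rfl

lemma sum_LRIndex (f : LRIndex n m r → ℝ) :
    ∑ p, f p = ∑ i, ∑ k, f (.inl (i, k)) + ∑ j, ∑ k, f (.inr (.inl (j, k))) +
      ∑ k, f (.inr (.inr k)) := by
  simp only [Fintype.sum_sum_type, Fintype.sum_prod_type, add_assoc]

lemma flatten_pos_iff {x : LRTriple n m r} :
    (∀ p, 0 < flatten x p) ↔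
      (∀ i k, 0 < x.1 i k) ∧ (∀ j k, 0 < x.2.1 j k) ∧ ∀ k, 0 < x.2.2 k :=
  ⟨fun h => ⟨fun i k => h (.inl (i, k)), fun j k => h (.inr (.inl (j, k))),
    fun k => h (.inr (.inr k))⟩,
   fun ⟨hQ, hR, hg⟩ p => by rcases p with ⟨i, k⟩ | ⟨j, k⟩ | k; exacts [hQ i k, hR j k, hg k]⟩

lemma tripleKL_eq_entKL (x y : LRTriple n m r) : tripleKL x y = entKL (flatten x) (flatten y) := by
  simp only [tripleKL, matKL, vecKL, entKL, sum_LRIndex, flatten_inl, flatten_inr_inl,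
    flatten_inr_inr]

lemma tripleInner_eq_dotProduct (x y : LRTriple n m r) :
    tripleInner x y = flatten x ⬝ᵥ flatten y := by
  simp only [tripleInner, frobInner, dotProduct, sum_LRIndex, flatten_inl, flatten_inr_inl,
    flatten_inr_inr]

lemma specNorm_nonneg (C : Mat n m) : 0 ≤ specNorm C := norm_nonneg _

def transportForm (C : Mat n m) :
    EuclideanSpace ℝ (Fin n) →ₗ[ℝ] EuclideanSpace ℝ (Fin m) →ₗ[ℝ] ℝ :=
  (innerₗ _).compl₂ (toEuclideanLin C)

lemma abs_transportForm_le (C : Mat n m) (u : EuclideanSpace ℝ (Fin n))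
    (v : EuclideanSpace ℝ (Fin m)) : |transportForm C u v| ≤ specNorm C * (‖u‖ * ‖v‖) := by
  calc |transportForm C u v| = |⟪u, toEuclideanLin C v⟫| := rfl
    _ ≤ ‖u‖ * ‖toEuclideanLin C v‖ := abs_real_inner_le_norm _ _
    _ ≤ ‖u‖ * (specNorm C * ‖v‖) := by
      gcongr; exact (LinearMap.toContinuousLinearMap (toEuclideanLin C)).le_opNorm v
    _ = specNorm C * (‖u‖ * ‖v‖) := by ring

def column {p : ℕ} (P : Mat p r) (k : Fin r) : EuclideanSpace ℝ (Fin p) :=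
  WithLp.toLp 2 fun i => P i k

lemma norm_column_le_sum {p : ℕ} {P : Mat p r} (hP : ∀ i k, 0 ≤ P i k) (k : Fin r) :
    ‖column P k‖ ≤ ∑ i, P i k := by
  rw [← sq_le_sq₀ (norm_nonneg _) (Finset.sum_nonneg fun i _ => hP i k),
    EuclideanSpace.real_norm_sq_eq]
  exact Finset.sum_sq_le_sq_sum_of_nonneg fun i _ => hP i k

lemma norm_column_sub_sq {p : ℕ} (P P' : Mat p r) (k : Fin r) :
    ‖column P' k - column P k‖ ^ 2 = ∑ i, (P' i k - P i k) ^ 2 := by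
  rw [EuclideanSpace.real_norm_sq_eq]
  rfl

lemma transportForm_column (C : Mat n m) (Q : Mat n r) (R : Mat m r) (k : Fin r) :
    transportForm C (column Q k) (column R k) = ∑ i, ∑ j, Q i k * C i j * R j k := by
  change ⟪column Q k, toEuclideanLin C (column R k)⟫ = _
  simp only [EuclideanSpace.inner_eq_star_dotProduct, toLpLin_apply, column, dotProduct, mulVec,
    Finset.sum_mul, star_trivial]
  exact Finset.sum_congr rfl fun i _ => Finset.sum_congr rfl fun j _ => by ring

lemma frobInner_mul_diagonal_mul_transpose (C : Mat n m) (Q : Mat n r) (R : Mat m r)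
    (w : Fin r → ℝ) :
    frobInner C (Q * diagonal w * Rᵀ) = ∑ k, w k * transportForm C (column Q k) (column R k) := by
  simp only [frobInner, transportForm_column, mul_apply, diagonal_apply, mul_ite, mul_zero,
    Finset.sum_ite_eq', Finset.mem_univ, if_true, transpose_apply, Finset.mul_sum]
  rw [sum_sum_sum_comm]
  exact Finset.sum_congr rfl fun _ _ => Finset.sum_congr rfl fun _ _ =>
    Finset.sum_congr rfl fun _ _ => by ring

lemma Fobj_eq (C : Mat n m) (ε : ℝ) (x : LRTriple n m r) :
    Fobj C ε x = ∑ k, (x.2.2 k)⁻¹ * transportForm C (column x.1 k) (column x.2.1 k) +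
      ε * ∑ p, flatten x p * (log (flatten x p) - 1) := by
  rw [Fobj, frobInner_mul_diagonal_mul_transpose, sum_LRIndex]
  simp only [matH, vecH, flatten_inl, flatten_inr_inl, flatten_inr_inr]
  ring

lemma tripleInner_gradF (C : Mat n m) (ε : ℝ) (x z : LRTriple n m r) :
    tripleInner (gradF C ε x) z =
      ∑ k, ((x.2.2 k)⁻¹ * (transportForm C (column z.1 k) (column x.2.1 k) +
        transportForm C (column x.1 k) (column z.2.1 k)) -
        transportForm C (column x.1 k) (column x.2.1 k) * z.2.2 k / x.2.2 k ^ 2) +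
      ε * ∑ p, log (flatten x p) * flatten z p := by
  simp only [tripleInner, gradF, frobInner, of_apply, transportForm_column, mul_apply,
    transpose_apply, sum_LRIndex, flatten_inl, flatten_inr_inl, flatten_inr_inr, add_mul,
    Finset.sum_add_distrib, Finset.mul_sum, Finset.sum_mul, Finset.sum_div, mul_add,
    Finset.sum_sub_distrib, neg_div, neg_mul, Finset.sum_neg_distrib]
  have hQ : ∑ i, ∑ k, ∑ j, C i j * x.2.1 j k * (x.2.2 k)⁻¹ * z.1 i k =
      ∑ k, ∑ i, ∑ j, (x.2.2 k)⁻¹ * (z.1 i k * C i j * x.2.1 j k) := by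
    rw [Finset.sum_comm]
    exact Finset.sum_congr rfl fun _ _ => Finset.sum_congr rfl fun _ _ =>
      Finset.sum_congr rfl fun _ _ => by ring
  have hR : ∑ j, ∑ k, ∑ i, C i j * x.1 i k * (x.2.2 k)⁻¹ * z.2.1 j k =
      ∑ k, ∑ i, ∑ j, (x.2.2 k)⁻¹ * (x.1 i k * C i j * z.2.1 j k) := by
    rw [Finset.sum_comm]
    refine Finset.sum_congr rfl fun _ _ => ?_
    rw [Finset.sum_comm]
    exact Finset.sum_congr rfl fun _ _ => Finset.sum_congr rfl fun _ _ => by ring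
  have hg : ∑ k, ∑ j, ∑ i, x.1 i k * C i j * x.2.1 j k / x.2.2 k ^ 2 * z.2.2 k =
      ∑ k, ∑ i, ∑ j, x.1 i k * C i j * x.2.1 j k * z.2.2 k / x.2.2 k ^ 2 := by
    refine Finset.sum_congr rfl fun _ _ => ?_
    rw [Finset.sum_comm]
    exact Finset.sum_congr rfl fun _ _ => Finset.sum_congr rfl fun _ _ => by ring
  rw [hQ, hR, hg]
  simp only [mul_assoc]
  ring

variable {a : Fin n → ℝ} {b : Fin m → ℝ} {α : ℝ}

lemma flatten_nonneg_of_mem_CsetAlpha {x : LRTriple n m r} (hx : x ∈ CsetAlpha a b r α)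
    (p : LRIndex n m r) : 0 ≤ flatten x p := by
  obtain ⟨-, hQ, hR, hg, -, -⟩ := hx
  rcases p with ⟨i, k⟩ | ⟨j, k⟩ | k
  exacts [hQ i k, hR j k, hg k]

lemma flatten_le_one_of_mem_CsetAlpha (ha : ∑ i, a i = 1) {x : LRTriple n m r}
    (hx : x ∈ CsetAlpha a b r α) (p : LRIndex n m r) : flatten x p ≤ 1 := by
  obtain ⟨⟨-, -, -, hQa, -⟩, hQ, hR, hg, hQg, hRg⟩ := hx
  have hg1 (k : Fin r) : x.2.2 k ≤ 1 :=
    calc x.2.2 k ≤ ∑ k, x.2.2 k := Finset.single_le_sum (fun k _ => hg k) (Finset.mem_univ k)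
      _ = ∑ i, ∑ k, x.1 i k := by simp only [← hQg]; exact Finset.sum_comm
      _ = 1 := by simp only [hQa, ha]
  rcases p with ⟨i, k⟩ | ⟨j, k⟩ | k
  · exact (hQg k ▸ Finset.single_le_sum (fun i _ => hQ i k) (Finset.mem_univ i)).trans (hg1 k)
  · exact (hRg k ▸ Finset.single_le_sum (fun j _ => hR j k) (Finset.mem_univ j)).trans (hg1 k)
  · exact hg1 k

theorem Fobj_le_add_tripleInner_gradF (C : Mat n m) (ε : ℝ) (ha : ∑ i, a i = 1) (hα : 0 < α)
    {x y : LRTriple n m r} (hx : x ∈ CsetAlpha a b r α) (hy : y ∈ CsetAlpha a b r α)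
    (hxpos : ∀ p, 0 < flatten x p) (hypos : ∀ p, 0 < flatten y p) :
    Fobj C ε y ≤ Fobj C ε x + (tripleInner (gradF C ε x) y - tripleInner (gradF C ε x) x) +
      (ε + 3 * specNorm C / α) * entBregman (flatten y) (flatten x) := by
  set B := transportForm C
  set σ := specNorm C
  have hσ : 0 ≤ σ := specNorm_nonneg C
  have hxg (k : Fin r) : 0 < x.2.2 k := hxpos (.inr (.inr k))
  have hcol (k : Fin r) :
      B (column y.1 k) (column y.2.1 k) / y.2.2 k -
        (B (column y.1 k) (column x.2.1 k) + B (column x.1 k) (column y.2.1 k)) / x.2.2 k +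
        B (column x.1 k) (column x.2.1 k) * y.2.2 k / x.2.2 k ^ 2 ≤
      3 * σ / (2 * α) * (‖column y.1 k - column x.1 k‖ ^ 2 +
        ‖column y.2.1 k - column x.2.1 k‖ ^ 2 + (y.2.2 k - x.2.2 k) ^ 2) :=
    bilinear_div_remainder_le B hσ (abs_transportForm_le C) hα (hx.1.2.2.1 k) (hy.1.2.2.1 k)
      ((norm_column_le_sum hx.2.1 k).trans_eq (hx.2.2.2.2.1 k))
      ((norm_column_le_sum hx.2.2.1 k).trans_eq (hx.2.2.2.2.2 k))
  have hsq : ∑ k, (‖column y.1 k - column x.1 k‖ ^ 2 + ‖column y.2.1 k - column x.2.1 k‖ ^ 2 +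
      (y.2.2 k - x.2.2 k) ^ 2) = ∑ p, (flatten y p - flatten x p) ^ 2 := by
    simp only [norm_column_sub_sq, sum_LRIndex, flatten_inl, flatten_inr_inl, flatten_inr_inr,
      Finset.sum_add_distrib]
    rw [Finset.sum_comm (s := univ (α := Fin r)) (t := univ (α := Fin n)),
      Finset.sum_comm (s := univ (α := Fin r)) (t := univ (α := Fin m))]
  have hquad := sum_sq_sub_le_two_mul_entBregman hxpos
    (flatten_le_one_of_mem_CsetAlpha ha hx) hypos (flatten_le_one_of_mem_CsetAlpha ha hy)
  have htransport :
      ∑ k, (y.2.2 k)⁻¹ * B (column y.1 k) (column y.2.1 k) -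
        ∑ k, (x.2.2 k)⁻¹ * B (column x.1 k) (column x.2.1 k) -
        (∑ k, ((x.2.2 k)⁻¹ * (B (column y.1 k) (column x.2.1 k) +
            B (column x.1 k) (column y.2.1 k)) -
          B (column x.1 k) (column x.2.1 k) * y.2.2 k / x.2.2 k ^ 2) -
        ∑ k, ((x.2.2 k)⁻¹ * (B (column x.1 k) (column x.2.1 k) +
            B (column x.1 k) (column x.2.1 k)) -
          B (column x.1 k) (column x.2.1 k) * x.2.2 k / x.2.2 k ^ 2)) =
      ∑ k, (B (column y.1 k) (column y.2.1 k) / y.2.2 k -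
        (B (column y.1 k) (column x.2.1 k) + B (column x.1 k) (column y.2.1 k)) / x.2.2 k +
        B (column x.1 k) (column x.2.1 k) * y.2.2 k / x.2.2 k ^ 2) := by
    simp only [← Finset.sum_sub_distrib]
    refine Finset.sum_congr rfl fun k _ => ?_
    field_simp [(hxg k).ne']
    ring
  have hentropy : ∑ p, flatten y p * (log (flatten y p) - 1) -
      ∑ p, flatten x p * (log (flatten x p) - 1) -
      (∑ p, log (flatten x p) * flatten y p - ∑ p, log (flatten x p) * flatten x p) =
      entBregman (flatten y) (flatten x) := by
    simp only [entBregman, ← Finset.sum_sub_distrib]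
    refine Finset.sum_congr rfl fun p _ => ?_
    rw [log_div (hypos p).ne' (hxpos p).ne']
    ring
  have hremainder : ∑ k, (B (column y.1 k) (column y.2.1 k) / y.2.2 k -
      (B (column y.1 k) (column x.2.1 k) + B (column x.1 k) (column y.2.1 k)) / x.2.2 k +
      B (column x.1 k) (column x.2.1 k) * y.2.2 k / x.2.2 k ^ 2) ≤
      3 * σ / α * entBregman (flatten y) (flatten x) :=
    calc _ ≤ ∑ k, 3 * σ / (2 * α) * (‖column y.1 k - column x.1 k‖ ^ 2 +
          ‖column y.2.1 k - column x.2.1 k‖ ^ 2 + (y.2.2 k - x.2.2 k) ^ 2) :=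
          Finset.sum_le_sum fun k _ => hcol k
      _ ≤ 3 * σ / (2 * α) * (2 * entBregman (flatten y) (flatten x)) := by
          rw [← Finset.mul_sum, hsq]; gcongr
      _ = 3 * σ / α * entBregman (flatten y) (flatten x) := by field_simp
  rw [Fobj_eq, Fobj_eq, tripleInner_gradF, tripleInner_gradF]
  linear_combination hremainder + htransport + ε * hentropy

lemma bddBelow_Fobj_image_CsetAlpha (C : Mat n m) {ε : ℝ} (hε : 0 ≤ ε)
    (ha : ∑ i, a i = 1) (hα : 0 < α) : BddBelow (Fobj C ε '' CsetAlpha a b r α) := by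
  refine ⟨-(specNorm C * r) - ε * Fintype.card (LRIndex n m r), ?_⟩
  rintro _ ⟨x, hx, rfl⟩
  have hσ := specNorm_nonneg C
  have htransport (k : Fin r) :
      -specNorm C ≤ (x.2.2 k)⁻¹ * transportForm C (column x.1 k) (column x.2.1 k) := by
    have hg : 0 < x.2.2 k := hα.trans_le (hx.1.2.2.1 k)
    have hg1 : x.2.2 k ≤ 1 := flatten_le_one_of_mem_CsetAlpha ha hx (.inr (.inr k))
    have hB := abs_transportForm_le C (column x.1 k) (column x.2.1 k)
    have hQ := (norm_column_le_sum hx.2.1 k).trans_eq (hx.2.2.2.2.1 k)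
    have hR := (norm_column_le_sum hx.2.2.1 k).trans_eq (hx.2.2.2.2.2 k)
    calc -specNorm C ≤ (x.2.2 k)⁻¹ * -(specNorm C * (x.2.2 k * x.2.2 k)) := by
          field_simp
          nlinarith
      _ ≤ _ := by
          gcongr
          exact neg_le_of_abs_le (hB.trans (by gcongr))
  have hentropy (p : LRIndex n m r) : -1 ≤ flatten x p * (log (flatten x p) - 1) := by
    have := InformationTheory.klFun_nonneg (flatten_nonneg_of_mem_CsetAlpha hx p)
    rw [InformationTheory.klFun_apply] at this
    linarith
  have hsum_transport := Finset.sum_le_sum fun k (_ : k ∈ univ) => htransport k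
  have hsum_entropy := Finset.sum_le_sum fun p (_ : p ∈ univ) => hentropy p
  simp only [Finset.sum_neg_distrib, Finset.sum_const, Finset.card_univ, Fintype.card_fin,
    nsmul_eq_mul, mul_one] at hsum_transport hsum_entropy
  rw [Fobj_eq]
  nlinarith

lemma isMinOn_image_flatten {S : Set (LRTriple n m r)} {c x y : LRTriple n m r} {s : ℝ}
    (h : IsMinOn (fun ζ => tripleInner c ζ + s * tripleKL ζ x) S y) :
    IsMinOn (fun u => flatten c ⬝ᵥ u + s * entKL u (flatten x)) (flatten '' S) (flatten y) := by
  refine isMinOn_iff.2 ?_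
  rintro _ ⟨ζ, hζ, rfl⟩
  simpa only [tripleInner_eq_dotProduct, tripleKL_eq_entKL] using isMinOn_iff.1 h ζ hζ

theorem flatten_pos_of_isMinOn {c x y : LRTriple n m r} {s : ℝ} (hs : 0 < s)
    (hx : x ∈ CsetAlpha a b r α) (hy : y ∈ CsetAlpha a b r α) (hxpos : ∀ p, 0 < flatten x p)
    (hmin : IsMinOn (fun ζ => tripleInner c ζ + s * tripleKL ζ x) (CsetAlpha a b r α) y)
    (p : LRIndex n m r) : 0 < flatten y p :=
  pos_of_isMinOn_dotProduct_add_entKL ((convex_CsetAlpha a b r α).linear_image flatten) hs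
    (Set.mem_image_of_mem _ hx) hxpos (Set.mem_image_of_mem _ hy)
    (flatten_nonneg_of_mem_CsetAlpha hy) (isMinOn_image_flatten hmin) p

theorem mul_tripleKL_add_le_Fobj_sub_of_isMinOn (C : Mat n m) {ε L : ℝ} (hε : 0 ≤ ε)
    (ha : ∑ i, a i = 1) (hα : 0 < α) (hL : ε + 3 * specNorm C / α ≤ L) {x y : LRTriple n m r}
    (hx : x ∈ CsetAlpha a b r α) (hy : y ∈ CsetAlpha a b r α) (hxpos : ∀ p, 0 < flatten x p)
    (hypos : ∀ p, 0 < flatten y p)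
    (hmin : IsMinOn (fun ζ => tripleInner (gradF C ε x) ζ + 2 * L * tripleKL ζ x)
      (CsetAlpha a b r α) y) :
    L * (tripleKL x y + tripleKL y x) ≤ Fobj C ε x - Fobj C ε y := by
  have hL0 : 0 ≤ L :=
    hL.trans' (add_nonneg hε (div_nonneg (mul_nonneg zero_le_three (specNorm_nonneg C)) hα.le))
  have hvi := mul_jeffreys_le_of_isMinOn_dotProduct_add_entKL
    ((convex_CsetAlpha a b r α).linear_image flatten) (Set.mem_image_of_mem _ hx) hxpos
    (Set.mem_image_of_mem _ hy) hypos (isMinOn_image_flatten hmin)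
  have hsmooth := Fobj_le_add_tripleInner_gradF C ε ha hα hx hy hxpos hypos
  have hkl := entKL_add_entKL_le_jeffreys (fun p => (hxpos p).le) (fun p => (hypos p).le)
  have hyx := entBregman_nonneg (fun p => (hypos p).le) hxpos
  have hxy := entBregman_nonneg (fun p => (hxpos p).le) hypos
  rw [jeffreys_eq_entBregman_add, dotProduct_sub] at hvi
  rw [jeffreys_eq_entBregman_add] at hkl
  rw [tripleInner_eq_dotProduct, tripleInner_eq_dotProduct] at hsmooth
  rw [tripleKL_eq_entKL, tripleKL_eq_entKL]
  nlinarith [mul_le_mul_of_nonneg_right hL hyx, mul_le_mul_of_nonneg_left hkl hL0,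
    mul_nonneg hL0 hxy]

end LowRankCoordinates

lemma add_three_mul_div_le_sqrt {σ ε α : ℝ} (hσ : 0 ≤ σ) (hε : 0 ≤ ε) (hα : 0 < α)
    (hα1 : α ≤ 1) :
    ε + 3 * σ / α ≤ √(3 * (2 * σ ^ 2 / α ^ 4 + ((ε + 2 * σ) / α ^ 3) ^ 2)) := by
  have hα3 : α ^ 3 ≤ α := pow_le_of_le_one hα.le hα1 (by norm_num)
  rw [le_sqrt (by positivity) (by positivity)]
  calc (ε + 3 * σ / α) ^ 2 ≤ ((ε + 3 * σ) / α ^ 3) ^ 2 := by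
        rw [add_div]
        gcongr
        · exact le_div_self hε (by positivity) (pow_le_one₀ hα.le hα1)
      _ ≤ 3 * ((ε + 2 * σ) / α ^ 3) ^ 2 := by
        rw [div_pow, div_pow, ← mul_div_assoc]
        gcongr
        nlinarith
      _ ≤ 3 * (2 * σ ^ 2 / α ^ 4 + ((ε + 2 * σ) / α ^ 3) ^ 2) := by
        gcongr
        exact le_add_of_nonneg_left (by positivity)

theorem mirror_descent_LOT_convergence_general {n m : ℕ} (r : ℕ)
    (a : Fin n → ℝ) (ha : a ∈ posSimplex n)
    (b : Fin m → ℝ)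
    (C : Mat n m) (ε : ℝ) (hε : 0 ≤ ε)
    (α : ℝ) (hα : 0 < α) (hα' : α ≤ 1 / (r : ℝ))
    (N : ℕ) (hN : 1 ≤ N)
    (L γ : ℝ)
    (hL : L = Real.sqrt (3 * (2 * specNorm C ^ 2 / α ^ 4 +
      ((ε + 2 * specNorm C) / α ^ 3) ^ 2)))
    (hγ : γ = 1 / (2 * L))
    (ξ : ℕ → LRTriple n m r)
    (h₀ : ξ 0 ∈ CsetAlpha a b r α)
    (hpos₀ : (∀ i j, 0 < (ξ 0).1 i j) ∧ (∀ i j, 0 < (ξ 0).2.1 i j) ∧ ∀ i, 0 < (ξ 0).2.2 i)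
    (hiter : ∀ k : ℕ, ξ (k + 1) ∈ CsetAlpha a b r α ∧
      ∀ ζ ∈ CsetAlpha a b r α,
        tripleInner (gradF C ε (ξ k)) (ξ (k + 1)) + (1 / γ) * tripleKL (ξ (k + 1)) (ξ k) ≤
          tripleInner (gradF C ε (ξ k)) ζ + (1 / γ) * tripleKL ζ (ξ k))
    (D₀ : ℝ) (hD₀ : D₀ = Fobj C ε (ξ 0) - LOTreAlpha a b C ε r α) :
    ∃ k < N, (1 / γ ^ 2) * (tripleKL (ξ k) (ξ (k + 1)) + tripleKL (ξ (k + 1)) (ξ k)) ≤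
      4 * L * D₀ / N := by
  have hα1 : α ≤ 1 := le_one_of_le_one_div_natCast hα hα'
  have hLε : ε + 3 * specNorm C / α ≤ L :=
    hL ▸ add_three_mul_div_le_sqrt (specNorm_nonneg C) hε hα hα1
  -- if `L = 0` then `γ = 1 / 0 = 0`, and both sides vanish
  rcases (hL ▸ sqrt_nonneg _ : 0 ≤ L).eq_or_lt with rfl | hLpos
  · exact ⟨0, hN, by simp [hγ]⟩
  simp only [hγ, one_div_one_div] at hiter
  have hmem : ∀ k, ξ k ∈ CsetAlpha a b r α
    | 0 => h₀
    | k + 1 => (hiter k).1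
  have hpos (k : ℕ) : ∀ p, 0 < flatten (ξ k) p := by
    induction k with
    | zero => exact flatten_pos_iff.2 hpos₀
    | succ k ih =>
      exact flatten_pos_of_isMinOn (by positivity) (hmem k) (hmem (k + 1)) ih
        (isMinOn_iff.2 (hiter k).2)
  have hdescent (k : ℕ) :
      1 / γ ^ 2 * (tripleKL (ξ k) (ξ (k + 1)) + tripleKL (ξ (k + 1)) (ξ k)) ≤
        4 * L * Fobj C ε (ξ k) - 4 * L * Fobj C ε (ξ (k + 1)) := by
    have := mul_tripleKL_add_le_Fobj_sub_of_isMinOn C hε ha.2 hα hLε (hmem k) (hmem (k + 1))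
      (hpos k) (hpos (k + 1)) (isMinOn_iff.2 (hiter k).2)
    rw [hγ, _root_.one_div_pow, one_div_one_div]
    nlinarith
  obtain ⟨k, hk, hle⟩ := exists_lt_le_div_of_le_sub hN hdescent
  have hLOT : LOTreAlpha a b C ε r α ≤ Fobj C ε (ξ N) :=
    csInf_le (bddBelow_Fobj_image_CsetAlpha C hε ha.2 hα) ⟨ξ N, hmem N, rfl⟩
  refine ⟨k, hk, hle.trans (div_le_div_of_nonneg_right ?_ N.cast_nonneg)⟩
  rw [hD₀]
  nlinarith

/-- Non-asymptotic stationary convergence of the mirror-descent scheme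
for `F_ε` on `𝒞(a,b,r,α)` with constant step `γ = 1/(2 L_{ε,α})`:
`min_{0 ≤ k ≤ N−1} Δ_{ε,α}(ξ_k, γ) ≤ 4 L_{ε,α} D₀ / N`. -/
theorem mirror_descent_LOT_convergence {n m : ℕ} (r : ℕ) (hr : 1 ≤ r)
    (a : Fin n → ℝ) (ha : a ∈ posSimplex n)
    (b : Fin m → ℝ) (hb : b ∈ posSimplex m)
    (C : Mat n m) (ε : ℝ) (hε : 0 ≤ ε)
    (α : ℝ) (hα : 0 < α) (hα' : α ≤ 1 / (r : ℝ))
    (N : ℕ) (hN : 1 ≤ N)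
    (L γ : ℝ)
    (hL : L = Real.sqrt (3 * (2 * specNorm C ^ 2 / α ^ 4 +
      ((ε + 2 * specNorm C) / α ^ 3) ^ 2)))
    (hγ : γ = 1 / (2 * L))
    (ξ : ℕ → LRTriple n m r)
    (h₀ : ξ 0 ∈ CsetAlpha a b r α)
    (hpos₀ : (∀ i j, 0 < (ξ 0).1 i j) ∧ (∀ i j, 0 < (ξ 0).2.1 i j) ∧ ∀ i, 0 < (ξ 0).2.2 i)
    (hiter : ∀ k : ℕ, ξ (k + 1) ∈ CsetAlpha a b r α ∧
      ∀ ζ ∈ CsetAlpha a b r α,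
        tripleInner (gradF C ε (ξ k)) (ξ (k + 1)) + (1 / γ) * tripleKL (ξ (k + 1)) (ξ k) ≤
          tripleInner (gradF C ε (ξ k)) ζ + (1 / γ) * tripleKL ζ (ξ k))
    (D₀ : ℝ) (hD₀ : D₀ = Fobj C ε (ξ 0) - LOTreAlpha a b C ε r α) :
    ∃ k < N, (1 / γ ^ 2) * (tripleKL (ξ k) (ξ (k + 1)) + tripleKL (ξ (k + 1)) (ξ k)) ≤
      4 * L * D₀ / N :=
  mirror_descent_LOT_convergence_general r a ha b C ε hε α hα hα' N hN L γ hL hγ ξ h₀ hpos₀ hiter D₀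
    hD₀
end

section
/- Let X ⊆ ℝ^q be a nonempty closed convex set, let h be convex and continuously differentiable on a neighborhood of X, and let D_h(x,z) := h(x) − h(z) − ⟨∇h(z), x − z⟩ be the associated Bregman divergence. Let f be continuously differentiable on a neighborhood of X, L-smooth relative to h on X for some L > 0, and suppose f attains its minimum on X. Set γ := 1/(2L). Let x₀ ∈ X and, for k ≥ 0, let x_{k+1} ∈ X be a minimizer over X of x ↦ ⟨∇f(x_k), x⟩ + (1/γ) D_h(x, x_k) (assume such minimizers exist). Define Δ_k := (1/γ²)( D_h(x_k, x_{k+1}) + D_h(x_{k+1}, x_k) ). Then for every N ≥ 1, min_{0 ≤ k ≤ N−1} Δ_k ≤ 4 L D₀ / N, where D₀ := f(x₀) − min_{x ∈ X} f(x). -/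
open Matrix Finset Real
open scoped RealInnerProductSpace

/-! The first-order optimality condition of the prox step, tested in the direction of the
previous iterate, bounds `2L (D_h(x_k, x_{k+1}) + D_h(x_{k+1}, x_k))` by
`⟪∇f(x_k), x_k - x_{k+1}⟫`. Together with relative smoothness and `D_h ≥ 0` this yields the
descent inequality `L (D_h(x_k, x_{k+1}) + D_h(x_{k+1}, x_k)) ≤ f(x_k) - f(x_{k+1})`, that is
`Δ_k ≤ 4L (f(x_k) - f(x_{k+1}))`. Summing over `k < N` telescopes to at most `4L D₀`, and the
smallest of the `N` terms is at most their average. -/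

section Bregman

variable {E : Type*} [NormedAddCommGroup E] [InnerProductSpace ℝ E] [CompleteSpace E]

noncomputable def bregmanDiv (h : E → ℝ) (x z : E) : ℝ := h x - h z - ⟪gradient h z, x - z⟫

lemma bregmanDiv_add_bregmanDiv_swap (h : E → ℝ) (x z : E) :
    bregmanDiv h x z + bregmanDiv h z x = ⟪gradient h x - gradient h z, x - z⟫ := by
  simp only [bregmanDiv, inner_sub_left, inner_sub_right]
  ring

lemma ConvexOn.inner_gradient_le_sub {s : Set E} {h : E → ℝ} (hh : ConvexOn ℝ s h) {x z : E}
    (hx : x ∈ s) (hz : z ∈ s) (hd : DifferentiableAt ℝ h z) :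
    ⟪gradient h z, x - z⟫ ≤ h x - h z := by
  let ℓ : ℝ →ᵃ[ℝ] E := AffineMap.lineMap z x
  have hderiv : HasDerivAt (h ∘ ℓ) ⟪gradient h z, x - z⟫ 0 := by
    rw [inner_gradient_left]
    refine HasFDerivAt.comp_hasDerivAt (x := 0) (f := ℓ) ?_ AffineMap.hasDerivAt_lineMap
    simpa [ℓ] using hd.hasFDerivAt
  simpa [slope_def_field, ℓ] using
    (hh.comp_affineMap ℓ).le_slope_of_hasDerivAt (x := 0) (y := 1) (by simpa [ℓ]) (by simpa [ℓ])
      one_pos hderiv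

lemma ConvexOn.bregmanDiv_nonneg {s : Set E} {h : E → ℝ} (hh : ConvexOn ℝ s h) {x z : E}
    (hx : x ∈ s) (hz : z ∈ s) (hd : DifferentiableAt ℝ h z) : 0 ≤ bregmanDiv h x z :=
  sub_nonneg.2 (hh.inner_gradient_le_sub hx hz hd)

lemma mul_bregmanDiv_add_swap_le_inner_of_isMinOn {s : Set E} (hs : Convex ℝ s) {h : E → ℝ}
    {g : E} {c : ℝ} {z p : E} (hz : z ∈ s) (hp : p ∈ s) (hd : DifferentiableAt ℝ h p)
    (hmin : IsMinOn (fun y => ⟪g, y⟫ + c * bregmanDiv h y z) s p) :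
    c * (bregmanDiv h z p + bregmanDiv h p z) ≤ ⟪g, z - p⟫ := by
  have hderiv : HasFDerivAt (fun y => ⟪g, y⟫ + c * bregmanDiv h y z)
      (innerSL ℝ g + c • (fderiv ℝ h p - innerSL ℝ (gradient h z))) p := by
    simp only [bregmanDiv, inner_sub_right]
    exact (innerSL ℝ g).hasFDerivAt.add
      (((hd.hasFDerivAt.sub_const _).sub ((innerSL ℝ _).hasFDerivAt.sub_const _)).const_mul c)
  have hfermat := hmin.localize.hasFDerivWithinAt_nonneg hderiv.hasFDerivWithinAt
    (sub_mem_posTangentConeAt_of_segment_subset (hs.segment_subset hp hz))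
  rw [bregmanDiv_add_bregmanDiv_swap, inner_sub_left]
  simp only [_root_.add_apply, _root_.smul_apply, _root_.sub_apply, innerSL_apply_apply,
    ← inner_gradient_left, smul_eq_mul] at hfermat
  linarith

lemma mul_bregmanDiv_add_swap_le_sub_of_isMinOn {s : Set E} (hs : Convex ℝ s) {h f : E → ℝ}
    (hh : ConvexOn ℝ s h) {g : E} {L : ℝ} (hL : 0 ≤ L) {z p : E} (hz : z ∈ s) (hp : p ∈ s)
    (hd : DifferentiableAt ℝ h p) (hsmooth : f p ≤ f z + ⟪g, p - z⟫ + L * bregmanDiv h p z)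
    (hmin : IsMinOn (fun y => ⟪g, y⟫ + 2 * L * bregmanDiv h y z) s p) :
    L * (bregmanDiv h z p + bregmanDiv h p z) ≤ f z - f p := by
  have hopt := mul_bregmanDiv_add_swap_le_inner_of_isMinOn hs hz hp hd hmin
  have hnonneg := mul_nonneg hL (hh.bregmanDiv_nonneg hz hp hd)
  rw [← neg_sub, inner_neg_right] at hsmooth
  linarith

end Bregman

lemma exists_lt_nat_mul_le_sub_of_le_sub_succ {a u : ℕ → ℝ} {m : ℝ} {N : ℕ}
    (ha : ∀ k, a k ≤ u k - u (k + 1)) (hm : m ≤ u N) (hN : 0 < N) :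
    ∃ k < N, N * a k ≤ u 0 - m := by
  obtain ⟨k, hk, hmin⟩ := Finset.exists_min_image (Finset.range N) a ⟨0, by simpa⟩
  refine ⟨k, Finset.mem_range.1 hk, ?_⟩
  calc N * a k = ∑ _ ∈ Finset.range N, a k := by simp
    _ ≤ ∑ i ∈ Finset.range N, a i := Finset.sum_le_sum hmin
    _ ≤ ∑ i ∈ Finset.range N, (u i - u (i + 1)) := Finset.sum_le_sum fun i _ => ha i
    _ = u 0 - u N := Finset.sum_range_sub' u N
    _ ≤ u 0 - m := by linarith

theorem mirror_descent_generic_convergence_general (q : ℕ)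
    (X : Set (EuclideanSpace ℝ (Fin q)))
    (hXconv : Convex ℝ X)
    (U : Set (EuclideanSpace ℝ (Fin q))) (hU : IsOpen U) (hXU : X ⊆ U)
    (h f : EuclideanSpace ℝ (Fin q) → ℝ)
    (hhconv : ConvexOn ℝ X h) (hhdiff : ContDiffOn ℝ 1 h U)
    (Dh : EuclideanSpace ℝ (Fin q) → EuclideanSpace ℝ (Fin q) → ℝ)
    (hDh : ∀ x z, Dh x z = h x - h z - ⟪gradient h z, x - z⟫)
    (L : ℝ) (hL : 0 < L)
    (hsmooth : ∀ x ∈ X, ∀ y ∈ X, f y ≤ f x + ⟪gradient f x, y - x⟫ + L * Dh y x)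
    (xmin : EuclideanSpace ℝ (Fin q))
    (hxminmin : ∀ y ∈ X, f xmin ≤ f y)
    (γ : ℝ) (hγ : γ = 1 / (2 * L))
    (x : ℕ → EuclideanSpace ℝ (Fin q)) (hx0 : x 0 ∈ X)
    (hiter : ∀ k : ℕ, x (k + 1) ∈ X ∧ ∀ y ∈ X,
      ⟪gradient f (x k), x (k + 1)⟫ + (1 / γ) * Dh (x (k + 1)) (x k) ≤
        ⟪gradient f (x k), y⟫ + (1 / γ) * Dh y (x k))
    (N : ℕ) (hN : 1 ≤ N)
    (D₀ : ℝ) (hD₀ : D₀ = f (x 0) - f xmin) :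
    ∃ k < N, (1 / γ ^ 2) * (Dh (x k) (x (k + 1)) + Dh (x (k + 1)) (x k)) ≤
      4 * L * D₀ / N := by
  obtain rfl : Dh = bregmanDiv h := funext fun y => funext fun z => hDh y z
  have hmem : ∀ k, x k ∈ X := fun k => Nat.rec hx0 (fun k _ => (hiter k).1) k
  have hdiff : ∀ z ∈ X, DifferentiableAt ℝ h z := fun z hz =>
    (hhdiff.differentiableOn one_ne_zero).differentiableAt (hU.mem_nhds (hXU hz))
  have hinvγ : 1 / γ = 2 * L := by rw [hγ]; field_simp
  have hdescent : ∀ k, L * (bregmanDiv h (x k) (x (k + 1)) + bregmanDiv h (x (k + 1)) (x k)) ≤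
      f (x k) - f (x (k + 1)) := fun k =>
    mul_bregmanDiv_add_swap_le_sub_of_isMinOn hXconv hhconv hL.le (hmem k) (hmem (k + 1))
      (hdiff _ (hmem (k + 1))) (hsmooth _ (hmem k) _ (hmem (k + 1))) (hinvγ ▸ (hiter k).2)
  obtain ⟨k, hk, hbound⟩ :=
    exists_lt_nat_mul_le_sub_of_le_sub_succ hdescent (hxminmin _ (hmem N)) hN
  refine ⟨k, hk, ?_⟩
  have hinvγsq : 1 / γ ^ 2 = 4 * L ^ 2 := by rw [hγ]; field_simp; ring
  rw [hinvγsq, hD₀, le_div_iff₀ (by positivity)]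
  calc 4 * L ^ 2 * (bregmanDiv h (x k) (x (k + 1)) + bregmanDiv h (x (k + 1)) (x k)) * N
      = 4 * L * (N * (L * (bregmanDiv h (x k) (x (k + 1)) + bregmanDiv h (x (k + 1)) (x k)))) := by
        ring
    _ ≤ 4 * L * (f (x 0) - f xmin) := by gcongr

/-- Generic non-asymptotic stationary convergence of mirror descent:
if `f` is `L`-smooth relative to `h` on a closed convex set `X`, attains its minimum on
`X`, and the iterates minimize the linearized prox objective with step `γ = 1/(2L)`, then
`min_{0 ≤ k ≤ N−1} Δ_k ≤ 4 L D₀ / N`. -/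
theorem mirror_descent_generic_convergence (q : ℕ)
    (X : Set (EuclideanSpace ℝ (Fin q)))
    (hXne : X.Nonempty) (hXclosed : IsClosed X) (hXconv : Convex ℝ X)
    (U : Set (EuclideanSpace ℝ (Fin q))) (hU : IsOpen U) (hXU : X ⊆ U)
    (h f : EuclideanSpace ℝ (Fin q) → ℝ)
    (hhconv : ConvexOn ℝ X h) (hhdiff : ContDiffOn ℝ 1 h U)
    (hfdiff : ContDiffOn ℝ 1 f U)
    (Dh : EuclideanSpace ℝ (Fin q) → EuclideanSpace ℝ (Fin q) → ℝ)
    (hDh : ∀ x z, Dh x z = h x - h z - ⟪gradient h z, x - z⟫)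
    (L : ℝ) (hL : 0 < L)
    (hsmooth : ∀ x ∈ X, ∀ y ∈ X, f y ≤ f x + ⟪gradient f x, y - x⟫ + L * Dh y x)
    (xmin : EuclideanSpace ℝ (Fin q)) (hxmin : xmin ∈ X)
    (hxminmin : ∀ y ∈ X, f xmin ≤ f y)
    (γ : ℝ) (hγ : γ = 1 / (2 * L))
    (x : ℕ → EuclideanSpace ℝ (Fin q)) (hx0 : x 0 ∈ X)
    (hiter : ∀ k : ℕ, x (k + 1) ∈ X ∧ ∀ y ∈ X,
      ⟪gradient f (x k), x (k + 1)⟫ + (1 / γ) * Dh (x (k + 1)) (x k) ≤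
        ⟪gradient f (x k), y⟫ + (1 / γ) * Dh y (x k))
    (N : ℕ) (hN : 1 ≤ N)
    (D₀ : ℝ) (hD₀ : D₀ = f (x 0) - f xmin) :
    ∃ k < N, (1 / γ ^ 2) * (Dh (x k) (x (k + 1)) + Dh (x (k + 1)) (x k)) ≤
      4 * L * D₀ / N :=
  mirror_descent_generic_convergence_general q X hXconv U hU hXU h f hhconv hhdiff Dh hDh L hL
    hsmooth xmin hxminmin γ hγ x hx0 hiter N hN D₀ hD₀
end

section
/- Let a ∈ Δ_n^*, b ∈ Δ_m^*, g ∈ Δ_r^*, C ∈ ℝ^{n×m} and ε ≥ 0. Set L_ε := sqrt( 2( ‖C‖₂² ‖Diag(1/g)‖₂² + ε² ) ), where ‖·‖₂ denotes the spectral norm. Then for all (Q₁,R₁), (Q₂,R₂) ∈ Π_{a,g} × Π_{b,g} with strictly positive entries, ‖∇f_ε(Q₁,R₁) − ∇f_ε(Q₂,R₂)‖₂ ≤ L_ε ‖(log Q₁ − log Q₂, log R₁ − log R₂)‖₂, where ∇f_ε(Q,R) = ( C R Diag(1/g) + ε log Q, Cᵀ Q Diag(1/g) + ε log R ), logarithms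 are entrywise, and the norm on pairs is the Euclidean norm of the concatenation (Frobenius norm on each block). -/
open Matrix Finset Real
open scoped RealInnerProductSpace

/-! The difference of the gradients is `(C ΔR D + ε Δlog Q, Cᵀ ΔQ D + ε Δlog R)` with
`D = Diag(1/g)`. Each block is bounded through `‖X + Y‖² ≤ 2(‖X‖² + ‖Y‖²)` and
`‖A M B‖_F ≤ ‖A‖₂ ‖M‖_F ‖B‖₂`. It remains to compare `ΔQ` with `Δlog Q`: the entries of a
coupling with a probability marginal lie in `(0, 1]`, where `log` has slope at least `1`, so
`|Q₁ - Q₂| ≤ |log Q₁ - log Q₂|` entrywise, and likewise for `R`. -/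

def frobSq {ι κ : Type*} [Fintype ι] [Fintype κ] (M : Matrix ι κ ℝ) : ℝ :=
  ∑ i, ∑ j, M i j ^ 2

section FrobeniusSq

variable {ι κ : Type*} [Fintype ι] [Fintype κ]

lemma frobSq_transpose (M : Matrix ι κ ℝ) : frobSq Mᵀ = frobSq M :=
  Finset.sum_comm

lemma frobSq_smul (c : ℝ) (M : Matrix ι κ ℝ) : frobSq (c • M) = c ^ 2 * frobSq M := by
  simp only [frobSq, Matrix.smul_apply, smul_eq_mul, mul_pow, Finset.mul_sum]

lemma frobSq_add_le (M N : Matrix ι κ ℝ) : frobSq (M + N) ≤ 2 * (frobSq M + frobSq N) := by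
  simp only [frobSq, Matrix.add_apply, ← Finset.sum_add_distrib, Finset.mul_sum]
  gcongr with i _ j _
  nlinarith [sq_nonneg (M i j - N i j)]

end FrobeniusSq

lemma specNorm_transpose {n m : ℕ} (C : Mat n m) : specNorm Cᵀ = specNorm C := by
  rw [specNorm, ← Matrix.conjTranspose_eq_transpose_of_trivial,
    Matrix.toEuclideanLin_conjTranspose_eq_adjoint, LinearMap.adjoint_toContinuousLinearMap]
  exact LinearIsometryEquiv.norm_map ContinuousLinearMap.adjoint _

lemma sum_sq_mulVec_le {n m : ℕ} (A : Mat n m) (w : Fin m → ℝ) :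
    ∑ i, (A *ᵥ w) i ^ 2 ≤ specNorm A ^ 2 * ∑ j, w j ^ 2 := by
  have hle := (LinearMap.toContinuousLinearMap (Matrix.toEuclideanLin A)).le_opNorm
    (WithLp.toLp 2 w)
  have hsq := pow_le_pow_left₀ (norm_nonneg _) hle 2
  rwa [mul_pow, EuclideanSpace.real_norm_sq_eq, LinearMap.coe_toContinuousLinearMap',
    Matrix.toLpLin_toLp, EuclideanSpace.real_norm_sq_eq] at hsq

lemma frobSq_mul_le_left {n m : ℕ} {κ : Type*} [Fintype κ] (A : Mat n m)
    (M : Matrix (Fin m) κ ℝ) :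
    frobSq (A * M) ≤ specNorm A ^ 2 * frobSq M := by
  rw [← frobSq_transpose, ← frobSq_transpose M, frobSq, frobSq, Finset.mul_sum]
  gcongr with k _
  exact sum_sq_mulVec_le A (fun j => M j k)

lemma frobSq_mul_le_right {n m : ℕ} {ι : Type*} [Fintype ι] (M : Matrix ι (Fin n) ℝ)
    (B : Mat n m) :
    frobSq (M * B) ≤ specNorm B ^ 2 * frobSq M := by
  rw [← frobSq_transpose, Matrix.transpose_mul, ← specNorm_transpose B, ← frobSq_transpose M]
  exact frobSq_mul_le_left _ _

lemma frobSq_mul_mul_le {n m p q : ℕ} (A : Mat n m) (M : Mat m p) (B : Mat p q) :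
    frobSq (A * M * B) ≤ specNorm A ^ 2 * specNorm B ^ 2 * frobSq M := by
  grw [frobSq_mul_le_right, frobSq_mul_le_left]
  exact le_of_eq (by ring)

lemma sub_le_log_sub_log {p q : ℝ} (hq : 0 < q) (hqp : q ≤ p) (hp : p ≤ 1) :
    p - q ≤ Real.log p - Real.log q := by
  have hp0 : 0 < p := hq.trans_le hqp
  have hlog := Real.one_sub_inv_le_log_of_pos (div_pos hp0 hq)
  rw [Real.log_div hp0.ne' hq.ne', inv_div] at hlog
  have hfrac : p - q ≤ 1 - q / p := by
    rw [one_sub_div hp0.ne', le_div_iff₀ hp0]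
    nlinarith
  linarith

lemma sq_sub_le_sq_log_sub_log {p q : ℝ} (hp : 0 < p) (hp1 : p ≤ 1) (hq : 0 < q)
    (hq1 : q ≤ 1) : (p - q) ^ 2 ≤ (Real.log p - Real.log q) ^ 2 := by
  rcases le_total q p with hqp | hpq
  · exact pow_le_pow_left₀ (sub_nonneg.2 hqp) (sub_le_log_sub_log hq hqp hp1) 2
  · calc (p - q) ^ 2 = (q - p) ^ 2 := by ring
      _ ≤ (Real.log q - Real.log p) ^ 2 :=
        pow_le_pow_left₀ (sub_nonneg.2 hpq) (sub_le_log_sub_log hp hpq hq1) 2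
      _ = (Real.log p - Real.log q) ^ 2 := by ring

lemma frobSq_sub_le_frobSq_log_sub {ι κ : Type*} [Fintype ι] [Fintype κ]
    {P Q : Matrix ι κ ℝ} (hP : ∀ i j, 0 < P i j ∧ P i j ≤ 1)
    (hQ : ∀ i j, 0 < Q i j ∧ Q i j ≤ 1) :
    frobSq (P - Q) ≤
      frobSq (Matrix.of (fun i j => Real.log (P i j)) - Matrix.of fun i j => Real.log (Q i j)) :=
  Finset.sum_le_sum fun i _ => Finset.sum_le_sum fun j _ =>
    sq_sub_le_sq_log_sub_log (hP i j).1 (hP i j).2 (hQ i j).1 (hQ i j).2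

lemma le_one_of_mem_couplings {n m : ℕ} {a : Fin n → ℝ} {b : Fin m → ℝ} {P : Mat n m}
    (hP : P ∈ couplings a b) (hb : b ∈ posSimplex m) (i : Fin n) (j : Fin m) : P i j ≤ 1 :=
  calc P i j ≤ ∑ i', P i' j :=
        Finset.single_le_sum (fun i' _ => hP.1 i' j) (Finset.mem_univ i)
    _ = b j := hP.2.2 j
    _ ≤ ∑ j', b j' := Finset.single_le_sum (fun j' _ => (hb.1 j').le) (Finset.mem_univ j)
    _ = 1 := hb.2

lemma gradf_sub {n m r : ℕ} (C : Mat n m) (g : Fin r → ℝ) (ε : ℝ) (x₁ x₂ : LRPair n m r) :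
    gradf C g ε x₁ - gradf C g ε x₂ =
      (C * (x₁.2 - x₂.2) * Matrix.diagonal (fun k => (g k)⁻¹) +
          ε • (logPair x₁ - logPair x₂).1,
        Cᵀ * (x₁.1 - x₂.1) * Matrix.diagonal (fun k => (g k)⁻¹) +
          ε • (logPair x₁ - logPair x₂).2) := by
  ext i k <;>
  simp only [gradf, logPair, Prod.fst_sub, Prod.snd_sub, Matrix.sub_apply, Matrix.add_apply,
    Matrix.smul_apply, Matrix.of_apply, Matrix.mul_diagonal, Matrix.mul_sub, smul_eq_mul] <;>
  ring

lemma frobSq_mul_mul_add_smul_le {n m p q : ℕ} (A : Mat n m) (M : Mat m p) (B : Mat p q)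
    (ε : ℝ) (N : Mat n q) :
    frobSq (A * M * B + ε • N) ≤
      2 * (specNorm A ^ 2 * specNorm B ^ 2 * frobSq M + ε ^ 2 * frobSq N) := by
  grw [frobSq_add_le, frobSq_smul, frobSq_mul_mul_le]

lemma pairNormSq_gradf_sub_le {n m r : ℕ} (C : Mat n m) (g : Fin r → ℝ) (ε : ℝ)
    (x₁ x₂ : LRPair n m r)
    (hQ : frobSq (x₁.1 - x₂.1) ≤ frobSq (logPair x₁ - logPair x₂).1)
    (hR : frobSq (x₁.2 - x₂.2) ≤ frobSq (logPair x₁ - logPair x₂).2) :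
    pairNormSq (gradf C g ε x₁ - gradf C g ε x₂) ≤
      2 * (specNorm C ^ 2 * specNorm (Matrix.diagonal fun k => (g k)⁻¹) ^ 2 + ε ^ 2) *
        pairNormSq (logPair x₁ - logPair x₂) := by
  set D := Matrix.diagonal fun k => (g k)⁻¹
  have hfirst := frobSq_mul_mul_add_smul_le C (x₁.2 - x₂.2) D ε (logPair x₁ - logPair x₂).1
  have hsecond := frobSq_mul_mul_add_smul_le Cᵀ (x₁.1 - x₂.1) D ε (logPair x₁ - logPair x₂).2
  rw [specNorm_transpose] at hsecond
  rw [gradf_sub]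
  change frobSq _ + frobSq _ ≤ _ * (frobSq _ + frobSq _)
  grw [hfirst, hsecond, hQ, hR]
  exact le_of_eq (by ring)

theorem gradf_relative_lipschitz_general {n m r : ℕ}
    (a : Fin n → ℝ)
    (b : Fin m → ℝ)
    (g : Fin r → ℝ) (hg : g ∈ posSimplex r)
    (C : Mat n m) (ε : ℝ)
    (L : ℝ)
    (hL : L = Real.sqrt (2 * (specNorm C ^ 2 *
      specNorm (Matrix.diagonal fun i => (g i)⁻¹) ^ 2 + ε ^ 2)))
    (x₁ x₂ : LRPair n m r)
    (hx₁ : x₁ ∈ pairFeasible a b g) (hx₂ : x₂ ∈ pairFeasible a b g)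
    (hpos₁ : (∀ i j, 0 < x₁.1 i j) ∧ ∀ i j, 0 < x₁.2 i j)
    (hpos₂ : (∀ i j, 0 < x₂.1 i j) ∧ ∀ i j, 0 < x₂.2 i j) :
    Real.sqrt (pairNormSq (gradf C g ε x₁ - gradf C g ε x₂)) ≤
      L * Real.sqrt (pairNormSq (logPair x₁ - logPair x₂)) := by
  have hQ : frobSq (x₁.1 - x₂.1) ≤ frobSq (logPair x₁ - logPair x₂).1 :=
    frobSq_sub_le_frobSq_log_sub
      (fun i j => ⟨hpos₁.1 i j, le_one_of_mem_couplings hx₁.1 hg i j⟩)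
      (fun i j => ⟨hpos₂.1 i j, le_one_of_mem_couplings hx₂.1 hg i j⟩)
  have hR : frobSq (x₁.2 - x₂.2) ≤ frobSq (logPair x₁ - logPair x₂).2 :=
    frobSq_sub_le_frobSq_log_sub
      (fun i j => ⟨hpos₁.2 i j, le_one_of_mem_couplings hx₁.2 hg i j⟩)
      (fun i j => ⟨hpos₂.2 i j, le_one_of_mem_couplings hx₂.2 hg i j⟩)
  rw [hL, ← Real.sqrt_mul (by positivity)]
  exact Real.sqrt_le_sqrt (pairNormSq_gradf_sub_le C g ε x₁ x₂ hQ hR)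

/-- Relative Lipschitz bound for the gradient of the fixed-marginal
objective `f_ε`: `‖∇f_ε(Q₁,R₁) − ∇f_ε(Q₂,R₂)‖₂ ≤ L_ε ‖(log Q₁ − log Q₂, log R₁ − log R₂)‖₂`
with `L_ε = sqrt(2(‖C‖₂² ‖Diag(1/g)‖₂² + ε²))`. -/
theorem gradf_relative_lipschitz {n m r : ℕ}
    (a : Fin n → ℝ) (ha : a ∈ posSimplex n)
    (b : Fin m → ℝ) (hb : b ∈ posSimplex m)
    (g : Fin r → ℝ) (hg : g ∈ posSimplex r)
    (C : Mat n m) (ε : ℝ) (hε : 0 ≤ ε)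
    (L : ℝ)
    (hL : L = Real.sqrt (2 * (specNorm C ^ 2 *
      specNorm (Matrix.diagonal fun i => (g i)⁻¹) ^ 2 + ε ^ 2)))
    (x₁ x₂ : LRPair n m r)
    (hx₁ : x₁ ∈ pairFeasible a b g) (hx₂ : x₂ ∈ pairFeasible a b g)
    (hpos₁ : (∀ i j, 0 < x₁.1 i j) ∧ ∀ i j, 0 < x₁.2 i j)
    (hpos₂ : (∀ i j, 0 < x₂.1 i j) ∧ ∀ i j, 0 < x₂.2 i j) :
    Real.sqrt (pairNormSq (gradf C g ε x₁ - gradf C g ε x₂)) ≤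
      L * Real.sqrt (pairNormSq (logPair x₁ - logPair x₂)) :=
  gradf_relative_lipschitz_general a b g hg C ε L hL x₁ x₂ hx₁ hx₂ hpos₁ hpos₂
end

section
/- Let a ∈ Δ_n^*, b ∈ Δ_m^*, r ≥ 1, and let ξ̃ = (Q̃, R̃, g̃) with Q̃ ∈ ℝ_{>0}^{n×r}, R̃ ∈ ℝ_{>0}^{m×r}, g̃ ∈ ℝ_{>0}^r. Let C̄₁(a,b,r) := {(Q,R,g) ∈ ℝ_{≥0}^{n×r} × ℝ_{≥0}^{m×r} × ℝ_{≥0}^r : Q 1_r = a, R 1_r = b} (the closure of C₁(a,b,r)). Then the unique minimizer of ζ ↦ KL(ζ, ξ̃) over C̄₁(a,b,r) is ( Diag(a/(Q̃ 1_r)) Q̃, Diag(b/(R̃ 1_r)) R̃, g̃ ), where the division is entrywise. -/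
open Matrix Finset Real
open scoped RealInnerProductSpace

/-! The divergence is a sum over the rows of `Q` and `R` and the entries of `g`, and the
constraints of `C̄₁` act on each row separately (the `g`-block is unconstrained). For a row
`p ≥ 0` of prescribed mass and the rescaling `c = s • t` of the reference row `t` to that mass,
`KL(p, t) - KL(p, c) = (∑ p) log s` does not depend on `p`, so
`KL(p, t) - KL(c, t) = KL(p, c) - KL(c, c)`, which is positive unless `p = c` by Gibbs'
inequality `x (log (x / c) - 1) ≥ -c` (equality iff `x = c`). -/

open InformationTheory

/-- `Diag(a / (Q 1)) Q` in the paper's notation. -/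
noncomputable def rowNormalize {n r : ℕ} (a : Fin n → ℝ) (Q : Mat n r) : Mat n r :=
  Matrix.of fun i j => a i / (∑ k, Q i k) * Q i j

lemma sum_rowNormalize {n r : ℕ} {a : Fin n → ℝ} {Q : Mat n r} (hQ : ∀ i, ∑ k, Q i k ≠ 0)
    (i : Fin n) : ∑ j, rowNormalize a Q i j = a i := by
  simp only [rowNormalize, Matrix.of_apply, ← Finset.mul_sum, div_mul_cancel₀ _ (hQ i)]

lemma rowNormalize_nonneg {n r : ℕ} {a : Fin n → ℝ} {Q : Mat n r} (ha : ∀ i, 0 ≤ a i)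
    (hQ : ∀ i j, 0 ≤ Q i j) (i : Fin n) (j : Fin r) : 0 ≤ rowNormalize a Q i j :=
  mul_nonneg (div_nonneg (ha i) (Finset.sum_nonneg fun k _ => hQ i k)) (hQ i j)

/-- A family of strict minimizers, one per coordinate, is a strict minimizer of the sum. -/
lemma Finset.sum_lt_sum_of_ne {ι : Type*} [Fintype ι] {α : ι → Type*} {F : ∀ i, α i → ℝ}
    {x y : ∀ i, α i} (h : ∀ i, y i ≠ x i → F i (x i) < F i (y i)) (hne : y ≠ x) :
    ∑ i, F i (x i) < ∑ i, F i (y i) := by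
  obtain ⟨i, hi⟩ := Function.ne_iff.mp hne
  refine Finset.sum_lt_sum (fun j _ => ?_) ⟨i, Finset.mem_univ i, h i hi⟩
  rcases eq_or_ne (y j) (x j) with hj | hj
  · rw [hj]
  · exact (h j hj).le

lemma add_lt_add_of_ne {α β : Type*} {f : α → ℝ} {g : β → ℝ} {x x' : α} {y y' : β}
    (hf : x' ≠ x → f x < f x') (hg : y' ≠ y → g y < g y') (hne : (x', y') ≠ (x, y)) :
    f x + g y < f x' + g y' := by
  rcases eq_or_ne x' x with rfl | hx
  · exact add_lt_add_right (hg fun hy => hne (hy ▸ rfl)) _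
  rcases eq_or_ne y' y with rfl | hy
  · exact add_lt_add_left (hf hx) _
  · exact add_lt_add (hf hx) (hg hy)

lemma neg_lt_mul_log_div_sub_one {x c : ℝ} (hx : 0 ≤ x) (hc : 0 < c) (hne : x ≠ c) :
    -c < x * (log (x / c) - 1) := by
  have hpos : 0 < klFun (x / c) :=
    (klFun_nonneg (div_nonneg hx hc.le)).lt_of_ne' fun h =>
      hne ((div_eq_one_iff_eq hc.ne').mp ((klFun_eq_zero_iff (div_nonneg hx hc.le)).mp h))
  have hkl : c * klFun (x / c) = x * (log (x / c) - 1) + c := by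
    rw [klFun_apply]
    field_simp
    ring
  linarith [mul_pos hc hpos]

lemma vecKL_self_lt {r : ℕ} {p c : Fin r → ℝ} (hp : ∀ i, 0 ≤ p i) (hc : ∀ i, 0 < c i)
    (hne : p ≠ c) : vecKL c c < vecKL p c :=
  Finset.sum_lt_sum_of_ne (F := fun i x => x * (log (x / c i) - 1)) (fun i hi => by
    simpa [div_self (hc i).ne'] using neg_lt_mul_log_div_sub_one (hp i) (hc i) hi) hne

lemma vecKL_smul_right {r : ℕ} (p t : Fin r → ℝ) {s : ℝ} (hs : s ≠ 0) (ht : ∀ i, t i ≠ 0) :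
    vecKL p (s • t) = vecKL p t - (∑ i, p i) * log s := by
  simp only [vecKL, Finset.sum_mul, ← Finset.sum_sub_distrib, Pi.smul_apply, smul_eq_mul]
  refine Finset.sum_congr rfl fun i _ => ?_
  rcases eq_or_ne (p i) 0 with hp | hp
  · simp [hp]
  · rw [mul_comm s, ← div_div, log_div (div_ne_zero hp (ht i)) hs]
    ring

lemma vecKL_smul_lt {r : ℕ} {p t : Fin r → ℝ} {s : ℝ} (hs : 0 < s) (ht : ∀ i, 0 < t i)
    (hp : ∀ i, 0 ≤ p i) (hsum : ∑ i, p i = ∑ i, (s • t) i) (hne : p ≠ s • t) :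
    vecKL (s • t) t < vecKL p t := by
  have hst : ∀ i, 0 < (s • t) i := fun i => mul_pos hs (ht i)
  have hp_split := vecKL_smul_right p t hs.ne' fun i => (ht i).ne'
  have hst_split := vecKL_smul_right (s • t) t hs.ne' fun i => (ht i).ne'
  have := vecKL_self_lt hp hst hne
  rw [hsum] at hp_split
  linarith

lemma matKL_rowNormalize_lt {n r : ℕ} {a : Fin n → ℝ} {Q Qt : Mat n r} (ha : ∀ i, 0 < a i)
    (hQt : ∀ i j, 0 < Qt i j) (hQ : ∀ i j, 0 ≤ Q i j) (hrow : ∀ i, ∑ j, Q i j = a i)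
    (hne : Q ≠ rowNormalize a Qt) : matKL (rowNormalize a Qt) Qt < matKL Q Qt := by
  have hQt_sum : ∀ i, 0 < ∑ k, Qt i k := fun i =>
    Finset.sum_pos (fun k _ => hQt i k)
      (Finset.nonempty_of_sum_ne_zero ((hrow i).trans_ne (ha i).ne'))
  refine Finset.sum_lt_sum_of_ne (F := fun i q => vecKL q (Qt i)) (fun i hi => ?_) hne
  exact vecKL_smul_lt (div_pos (ha i) (hQt_sum i)) (hQt i) (hQ i)
    ((hrow i).trans (sum_rowNormalize (fun i => (hQt_sum i).ne') i).symm) hi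

/-- KL projection onto the closure `𝒞̄₁(a,b,r)`: the unique minimizer
of `ζ ↦ KL(ζ, (Q̃,R̃,g̃))` over `𝒞̄₁(a,b,r)` is `(Diag(a/(Q̃1)) Q̃, Diag(b/(R̃1)) R̃, g̃)`. -/
theorem KL_projection_C1bar {n m : ℕ} (r : ℕ) (hr : 1 ≤ r)
    (a : Fin n → ℝ) (ha : a ∈ posSimplex n)
    (b : Fin m → ℝ) (hb : b ∈ posSimplex m)
    (Qt : Mat n r) (hQt : ∀ i j, 0 < Qt i j)
    (Rt : Mat m r) (hRt : ∀ i j, 0 < Rt i j)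
    (gt : Fin r → ℝ) (hgt : ∀ i, 0 < gt i)
    (cand : LRTriple n m r)
    (hcand : cand =
      (Matrix.of fun i j => a i / (∑ k, Qt i k) * Qt i j,
       Matrix.of fun i j => b i / (∑ k, Rt i k) * Rt i j,
       gt)) :
    cand ∈ C1barSet a b r ∧
      ∀ ζ ∈ C1barSet a b r, ζ ≠ cand →
        tripleKL cand (Qt, Rt, gt) < tripleKL ζ (Qt, Rt, gt) := by
  change cand = (rowNormalize a Qt, rowNormalize b Rt, gt) at hcand
  subst hcand
  have row_sum_ne_zero {k : ℕ} (M : Mat k r) (hM : ∀ i j, 0 < M i j) (i : Fin k) :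
      ∑ j, M i j ≠ 0 :=
    (Finset.sum_pos (fun j _ => hM i j) ⟨⟨0, hr⟩, Finset.mem_univ _⟩).ne'
  refine ⟨⟨rowNormalize_nonneg (fun i => (ha.1 i).le) fun i j => (hQt i j).le,
    rowNormalize_nonneg (fun i => (hb.1 i).le) fun i j => (hRt i j).le, fun i => (hgt i).le,
    sum_rowNormalize (row_sum_ne_zero Qt hQt), sum_rowNormalize (row_sum_ne_zero Rt hRt)⟩, ?_⟩
  rintro ⟨Q, R, g⟩ ⟨hQ, hR, hg, hQrow, hRrow⟩ hne
  change matKL (rowNormalize a Qt) Qt + matKL (rowNormalize b Rt) Rt + vecKL gt gt <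
    matKL Q Qt + matKL R Rt + vecKL g gt
  have hQR : ((Q, R), g) ≠ ((rowNormalize a Qt, rowNormalize b Rt), gt) := by
    simpa using hne
  exact add_lt_add_of_ne (f := fun QR : LRPair n m r => matKL QR.1 Qt + matKL QR.2 Rt)
    (g := (vecKL · gt))
    (add_lt_add_of_ne (f := (matKL · Qt)) (g := (matKL · Rt))
      (matKL_rowNormalize_lt ha.1 hQt hQ hQrow) (matKL_rowNormalize_lt hb.1 hRt hR hRrow))
    (vecKL_self_lt hg hgt) hQR
end
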